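/- arXiv:1411.2978 — 6 statements merged into one kernel-verified Lean document; each statement's English description precedes it below -/
import Mathlib

section
/- Let D be a contractive distance on two-qubit density matrices. Then for all c1, c3 ∈ [-1,1], D(ρ(c1, -c1·c3, c3), ρ(c1, 0, 0)) = D(ρ(0, 0, c3), ρ(0, 0, 0)). (First translational invariance property of Theorem 1: the distance from a Bell-diagonal state on the phase-flip freezing surface to its projection onto the c1-axis is independent of c1.) -/
open Matrix Kronecker
open scoped ComplexOrder

noncomputable section

/-- 2×2 complex matrices (single-qubit operators). -/
abbrev Mat2 := Matrix (Fin 2) (Fin 2) ℂ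

/-- 4×4 complex matrices (two-qubit operators), indexed by `Fin 2 × Fin 2`. -/
abbrev Mat4 := Matrix (Fin 2 × Fin 2) (Fin 2 × Fin 2) ℂ

/-- Pauli matrix σ₁ (x). -/
def σ1 : Mat2 := !![0, 1; 1, 0]

/-- Pauli matrix σ₂ (y). -/
def σ2 : Mat2 := !![0, -Complex.I; Complex.I, 0]

/-- Pauli matrix σ₃ (z). -/
def σ3 : Mat2 := !![1, 0; 0, -1]

/-- The Bell-diagonal state ρ(c1,c2,c3) = (1/4)(I₄ + c1 σ₁⊗σ₁ + c2 σ₂⊗σ₂ + c3 σ₃⊗σ₃). -/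
def BD (c1 c2 c3 : ℝ) : Mat4 :=
  (1 / 4 : ℂ) • ((1 : Mat4) + (c1 : ℂ) • (σ1 ⊗ₖ σ1) + (c2 : ℂ) • (σ2 ⊗ₖ σ2)
    + (c3 : ℂ) • (σ3 ⊗ₖ σ3))

/-- A two-qubit density matrix: positive semidefinite with unit trace. -/
def IsDensityMatrix (ρ : Mat4) : Prop := ρ.PosSemidef ∧ ρ.trace = 1

/-- A CPTP map given by finitely many Kraus operators. -/
def IsCPTP (Λ : Mat4 → Mat4) : Prop :=
  ∃ (n : ℕ) (K : Fin n → Mat4),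
    (∑ i, (K i)ᴴ * K i) = 1 ∧ ∀ X, Λ X = ∑ i, K i * X * (K i)ᴴ

/-- A distance `D` is contractive if it contracts under every CPTP map. -/
def Contractive (D : Mat4 → Mat4 → ℝ) : Prop :=
  ∀ Λ : Mat4 → Mat4, IsCPTP Λ → ∀ ρ σ : Mat4,
    IsDensityMatrix ρ → IsDensityMatrix σ → D (Λ ρ) (Λ σ) ≤ D ρ σ

/-- A distance `D` is invariant under transposition. -/
def TransposeInvariant (D : Mat4 → Mat4 → ℝ) : Prop :=
  ∀ ρ σ : Mat4, IsDensityMatrix ρ → IsDensityMatrix σ → D ρᵀ σᵀ = D ρ σ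

/-- A distance `D` is jointly convex. -/
def JointlyConvex (D : Mat4 → Mat4 → ℝ) : Prop :=
  ∀ q : ℝ, 0 ≤ q → q ≤ 1 → ∀ ρ σ τ ς : Mat4,
    IsDensityMatrix ρ → IsDensityMatrix σ → IsDensityMatrix τ → IsDensityMatrix ς →
    D (q • ρ + (1 - q) • σ) (q • τ + (1 - q) • ς) ≤ q * D ρ τ + (1 - q) * D σ ς

/-- A classical-classical two-qubit state: ∑ᵢⱼ pᵢⱼ |aᵢ⟩⟨aᵢ| ⊗ |bⱼ⟩⟨bⱼ| with (pᵢⱼ) a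
probability distribution and {aᵢ}, {bⱼ} orthonormal bases of ℂ². -/
def IsClassical (χ : Mat4) : Prop :=
  ∃ (p : Fin 2 → Fin 2 → ℝ) (a b : Fin 2 → Fin 2 → ℂ),
    (∀ i j, 0 ≤ p i j) ∧ (∑ i, ∑ j, p i j = 1) ∧
    (∀ i i', ∑ k, (starRingEnd ℂ) (a i k) * a i' k = if i = i' then 1 else 0) ∧
    (∀ j j', ∑ k, (starRingEnd ℂ) (b j k) * b j' k = if j = j' then 1 else 0) ∧
    χ = ∑ i, ∑ j, (p i j : ℂ) •
      (Matrix.vecMulVec (a i) (star (a i)) ⊗ₖ Matrix.vecMulVec (b j) (star (b j)))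

/-- Membership in the tetrahedron of Bell-diagonal states. -/
def InTetra (c : ℝ × ℝ × ℝ) : Prop :=
  c ∈ convexHull ℝ
    ({((1 : ℝ), (-1 : ℝ), (1 : ℝ)), ((-1 : ℝ), (1 : ℝ), (1 : ℝ)),
      ((1 : ℝ), (1 : ℝ), (-1 : ℝ)), ((-1 : ℝ), (-1 : ℝ), (-1 : ℝ))} : Set (ℝ × ℝ × ℝ))

/-- Geometric discord: distance to the set of classical states. -/
def QD (D : Mat4 → Mat4 → ℝ) (ρ : Mat4) : ℝ :=
  sInf {x : ℝ | ∃ χ : Mat4, IsClassical χ ∧ x = D ρ χ}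

/-- The Pauli matrices, indexed. -/
def pauli : Fin 3 → Mat2 := ![σ1, σ2, σ3]


-- ===== auxiliary definitions =====

/-- σ₃ ⊗ 1, the local phase-flip unitary. -/
def G4 : Mat4 := σ3 ⊗ₖ (1 : Mat2)

def V1 : Mat4 := Matrix.of fun p q =>
  if (p = ((0:Fin 2),(0:Fin 2)) ∧ q = ((0:Fin 2),(0:Fin 2))) ∨ (p = (1,1) ∧ q = (0,0))
    ∨ (p = (0,1) ∧ q = (0,1)) ∨ (p = (1,0) ∧ q = (0,1)) then 1 else 0

def V2 : Mat4 := Matrix.of fun p q =>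
  if (p = ((0:Fin 2),(0:Fin 2)) ∧ q = ((1:Fin 2),(1:Fin 2))) ∨ (p = (1,1) ∧ q = (1,1))
    ∨ (p = (0,1) ∧ q = (1,0)) ∨ (p = (1,0) ∧ q = (1,0)) then 1 else 0

def W1 : Mat4 := Matrix.of fun p q =>
  if (p = ((0:Fin 2),(0:Fin 2)) ∧ q = ((0:Fin 2),(0:Fin 2))) ∨ (p = (0,1) ∧ q = (0,1)) then 1
  else if (p = ((1:Fin 2),(1:Fin 2)) ∧ q = ((0:Fin 2),(0:Fin 2))) ∨ (p = (1,0) ∧ q = (0,1)) then -1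
  else 0

def W2 : Mat4 := Matrix.of fun p q =>
  if (p = ((0:Fin 2),(0:Fin 2)) ∧ q = ((1:Fin 2),(1:Fin 2))) ∨ (p = (0,1) ∧ q = (1,0)) then 1
  else if (p = ((1:Fin 2),(1:Fin 2)) ∧ q = ((1:Fin 2),(1:Fin 2))) ∨ (p = (1,0) ∧ q = (1,0)) then -1
  else 0

/-- Unnormalized Bell basis as columns. -/
def Bm : Mat4 := Matrix.of fun p q =>
  if (p = ((0:Fin 2),(0:Fin 2)) ∧ (q = ((0:Fin 2),(0:Fin 2)) ∨ q = (0,1)))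
    ∨ (p = (1,1) ∧ q = (0,0)) ∨ (p = (0,1) ∧ (q = (1,0) ∨ q = (1,1)))
    ∨ (p = (1,0) ∧ q = (1,0)) then 1
  else if (p = ((1:Fin 2),(1:Fin 2)) ∧ q = ((0:Fin 2),(1:Fin 2)))
    ∨ (p = (1,0) ∧ q = (1,1)) then -1
  else 0

def dvec (a b c : ℝ) : Fin 2 × Fin 2 → ℂ := fun k =>
  if k = (0,0) then (((1+a-b+c)/8 : ℝ) : ℂ)
  else if k = (0,1) then (((1-a+b+c)/8 : ℝ) : ℂ)
  else if k = (1,0) then (((1+a+b-c)/8 : ℝ) : ℂ)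
  else (((1-a-b-c)/8 : ℝ) : ℂ)

-- ===== computational matrix lemmas =====

set_option maxHeartbeats 2000000 in
lemma BD_eq_conj (a b c : ℝ) : BD a b c = Bm * Matrix.diagonal (dvec a b c) * Bmᴴ := by
  ext ⟨i,j⟩ ⟨k,l⟩
  fin_cases i <;> fin_cases j <;> fin_cases k <;> fin_cases l <;>
    (simp [BD, Bm, dvec, σ1, σ2, σ3, Matrix.mul_apply, Matrix.conjTranspose_apply,
      Fintype.sum_prod_type, Fin.sum_univ_two, Matrix.one_apply, Prod.ext_iff,
      Matrix.diagonal_apply] <;> ring)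

set_option maxHeartbeats 2000000 in
lemma BD_trace (a b c : ℝ) : (BD a b c).trace = 1 := by
  simp [BD, Matrix.trace, Matrix.diag, σ1, σ2, σ3, Fintype.sum_prod_type, Fin.sum_univ_two,
    Matrix.one_apply]
  ring

set_option maxHeartbeats 2000000 in
lemma Deph (a b c : ℝ) :
    ((1/2 : ℝ) : ℂ) • BD a b c + ((1/2 : ℝ) : ℂ) • (G4 * BD a b c * G4) = BD 0 0 c := by
  ext ⟨i,j⟩ ⟨k,l⟩
  fin_cases i <;> fin_cases j <;> fin_cases k <;> fin_cases l <;>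
    (simp [BD, G4, σ1, σ2, σ3, Matrix.mul_apply, Fintype.sum_prod_type, Fin.sum_univ_two,
      Matrix.one_apply, Prod.ext_iff] <;> push_cast <;> ring)

set_option maxHeartbeats 2000000 in
lemma G4TP : G4ᴴ * G4 = 1 := by
  ext ⟨i,j⟩ ⟨k,l⟩
  fin_cases i <;> fin_cases j <;> fin_cases k <;> fin_cases l <;>
    simp [G4, σ3, Matrix.mul_apply, Matrix.conjTranspose_apply, Fintype.sum_prod_type,
      Fin.sum_univ_two, Matrix.one_apply, Prod.ext_iff]

set_option maxHeartbeats 1000000 in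
lemma G4H : G4ᴴ = G4 := by
  ext ⟨i,j⟩ ⟨k,l⟩
  fin_cases i <;> fin_cases j <;> fin_cases k <;> fin_cases l <;>
    simp [G4, σ3, Matrix.conjTranspose_apply, Matrix.one_apply, Prod.ext_iff]

set_option maxHeartbeats 2000000 in
lemma T1 : V1ᴴ * V1 + V2ᴴ * V2 = (2:ℂ) • 1 := by
  ext ⟨i,j⟩ ⟨k,l⟩
  fin_cases i <;> fin_cases j <;> fin_cases k <;> fin_cases l <;>
    (simp [V1, V2, Matrix.mul_apply, Matrix.conjTranspose_apply, Fintype.sum_prod_type,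
      Fin.sum_univ_two, Matrix.one_apply, Prod.ext_iff] <;> norm_num)

set_option maxHeartbeats 2000000 in
lemma T2 : W1ᴴ * W1 + W2ᴴ * W2 = (2:ℂ) • 1 := by
  ext ⟨i,j⟩ ⟨k,l⟩
  fin_cases i <;> fin_cases j <;> fin_cases k <;> fin_cases l <;>
    (simp [W1, W2, Matrix.mul_apply, Matrix.conjTranspose_apply, Fintype.sum_prod_type,
      Fin.sum_univ_two, Matrix.one_apply, Prod.ext_iff] <;> norm_num)

set_option maxHeartbeats 4000000 in
lemma E1 (c : ℝ) : V1 * BD 0 0 c * V1ᴴ + V2 * BD 0 0 c * V2ᴴ = (2:ℂ) • BD 1 (-c) c := by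
  ext ⟨i,j⟩ ⟨k,l⟩
  fin_cases i <;> fin_cases j <;> fin_cases k <;> fin_cases l <;>
    (simp [BD, V1, V2, σ1, σ2, σ3, Matrix.mul_apply, Matrix.conjTranspose_apply,
      Fintype.sum_prod_type, Fin.sum_univ_two, Matrix.one_apply, Prod.ext_iff] <;>
      push_cast <;> ring)

set_option maxHeartbeats 4000000 in
lemma E2 (c : ℝ) : W1 * BD 0 0 c * W1ᴴ + W2 * BD 0 0 c * W2ᴴ = (2:ℂ) • BD (-1) c c := by
  ext ⟨i,j⟩ ⟨k,l⟩
  fin_cases i <;> fin_cases j <;> fin_cases k <;> fin_cases l <;>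
    (simp [BD, W1, W2, σ1, σ2, σ3, Matrix.mul_apply, Matrix.conjTranspose_apply,
      Fintype.sum_prod_type, Fin.sum_univ_two, Matrix.one_apply, Prod.ext_iff] <;>
      push_cast <;> ring)

set_option maxHeartbeats 2000000 in
lemma mix (c1 c : ℝ) :
    (((1+c1)/4 : ℝ) : ℂ) • ((2:ℂ) • BD 1 (-c) c) + (((1-c1)/4 : ℝ) : ℂ) • ((2:ℂ) • BD (-1) c c)
      = BD c1 (-(c1*c)) c := by
  ext ⟨i,j⟩ ⟨k,l⟩
  fin_cases i <;> fin_cases j <;> fin_cases k <;> fin_cases l <;>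
    (simp [BD, σ1, σ2, σ3, Matrix.one_apply, Prod.ext_iff] <;> push_cast <;> ring)

-- ===== structural lemmas =====

lemma BD_density (a b c : ℝ) (h1 : 0 ≤ 1+a-b+c) (h2 : 0 ≤ 1-a+b+c)
    (h3 : 0 ≤ 1+a+b-c) (h4 : 0 ≤ 1-a-b-c) : IsDensityMatrix (BD a b c) := by
  refine ⟨?_, BD_trace a b c⟩
  rw [BD_eq_conj]
  have hd : 0 ≤ dvec a b c := by
    intro k
    fin_cases k
    · exact Complex.zero_le_real.mpr (by linarith)
    · exact Complex.zero_le_real.mpr (by linarith)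
    · exact Complex.zero_le_real.mpr (by linarith)
    · exact Complex.zero_le_real.mpr (by linarith)
  exact Matrix.PosSemidef.mul_mul_conjTranspose_same (Matrix.PosSemidef.diagonal hd) Bm

lemma kraus_pair (w : ℝ) (A B ρ : Mat4) :
    ((w:ℂ) • A) * ρ * ((w:ℂ) • A)ᴴ + ((w:ℂ) • B) * ρ * ((w:ℂ) • B)ᴴ
      = ((w*w : ℝ) : ℂ) • (A * ρ * Aᴴ + B * ρ * Bᴴ) := by
  simp only [Matrix.conjTranspose_smul, Complex.star_def, Complex.conj_ofReal,
    Matrix.smul_mul, Matrix.mul_smul, smul_smul, smul_add]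
  push_cast
  ring_nf

lemma kraus_pair' (w : ℝ) (A B : Mat4) :
    ((w:ℂ) • A)ᴴ * ((w:ℂ) • A) + ((w:ℂ) • B)ᴴ * ((w:ℂ) • B)
      = ((w*w : ℝ) : ℂ) • (Aᴴ * A + Bᴴ * B) := by
  simp only [Matrix.conjTranspose_smul, Complex.star_def, Complex.conj_ofReal,
    Matrix.smul_mul, Matrix.mul_smul, smul_smul, smul_add]
  push_cast
  ring_nf

/-- First translational invariance property of Theorem 1. -/
theorem freezing_translation_invariance_c1
    (D : Mat4 → Mat4 → ℝ) (hD : Contractive D)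
    (c1 c3 : ℝ) (hc1 : c1 ∈ Set.Icc (-1 : ℝ) 1) (hc3 : c3 ∈ Set.Icc (-1 : ℝ) 1) :
    D (BD c1 (-(c1 * c3)) c3) (BD c1 0 0) = D (BD 0 0 c3) (BD 0 0 0) := by
  obtain ⟨hc1l, hc1r⟩ := hc1
  obtain ⟨hc3l, hc3r⟩ := hc3
  have hp : 0 ≤ (1+c1)*(1+c3) := mul_nonneg (by linarith) (by linarith)
  have hq : 0 ≤ (1-c1)*(1+c3) := mul_nonneg (by linarith) (by linarith)
  have hr : 0 ≤ (1+c1)*(1-c3) := mul_nonneg (by linarith) (by linarith)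
  have hs : 0 ≤ (1-c1)*(1-c3) := mul_nonneg (by linarith) (by linarith)
  have hρ1 : IsDensityMatrix (BD c1 (-(c1*c3)) c3) :=
    BD_density _ _ _ (by nlinarith) (by nlinarith) (by nlinarith) (by nlinarith)
  have hρ2 : IsDensityMatrix (BD c1 0 0) :=
    BD_density _ _ _ (by linarith) (by linarith) (by linarith) (by linarith)
  have hρ3 : IsDensityMatrix (BD 0 0 c3) :=
    BD_density _ _ _ (by linarith) (by linarith) (by linarith) (by linarith)
  have hρ4 : IsDensityMatrix (BD 0 0 0) :=
    BD_density _ _ _ (by norm_num) (by norm_num) (by norm_num) (by norm_num)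
  -- the dephasing channel
  set w : ℝ := Real.sqrt (1/2) with hw
  have hww : w * w = 1/2 := Real.mul_self_sqrt (by norm_num)
  set K1 : Fin 2 → Mat4 := ![(w:ℂ) • (1 : Mat4), (w:ℂ) • G4] with hK1
  have hΛ1 : IsCPTP (fun X => ∑ i, K1 i * X * (K1 i)ᴴ) := by
    refine ⟨2, K1, ?_, fun X => rfl⟩
    rw [Fin.sum_univ_two]
    show ((w:ℂ) • (1:Mat4))ᴴ * ((w:ℂ) • (1:Mat4)) + ((w:ℂ) • G4)ᴴ * ((w:ℂ) • G4) = 1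
    rw [kraus_pair', hww, G4TP, Matrix.conjTranspose_one, Matrix.one_mul]
    push_cast
    module
  have hΛ1val : ∀ a b c : ℝ, (∑ i, K1 i * BD a b c * (K1 i)ᴴ) = BD 0 0 c := by
    intro a b c
    rw [Fin.sum_univ_two]
    show ((w:ℂ) • (1:Mat4)) * BD a b c * ((w:ℂ) • (1:Mat4))ᴴ
        + ((w:ℂ) • G4) * BD a b c * ((w:ℂ) • G4)ᴴ = BD 0 0 c
    rw [kraus_pair, hww, G4H, Matrix.conjTranspose_one, Matrix.one_mul, Matrix.mul_one,
      smul_add]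
    exact Deph a b c
  -- the correlating channel
  set u : ℝ := Real.sqrt ((1+c1)/4) with hu
  set v : ℝ := Real.sqrt ((1-c1)/4) with hv
  have huu : u * u = (1+c1)/4 := Real.mul_self_sqrt (by linarith)
  have hvv : v * v = (1-c1)/4 := Real.mul_self_sqrt (by linarith)
  set K2 : Fin 4 → Mat4 := ![(u:ℂ) • V1, (u:ℂ) • V2, (v:ℂ) • W1, (v:ℂ) • W2] with hK2
  have hΛ2 : IsCPTP (fun X => ∑ i, K2 i * X * (K2 i)ᴴ) := by
    refine ⟨4, K2, ?_, fun X => rfl⟩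
    rw [Fin.sum_univ_four]
    show (((u:ℂ) • V1)ᴴ * ((u:ℂ) • V1) + ((u:ℂ) • V2)ᴴ * ((u:ℂ) • V2)
        + ((v:ℂ) • W1)ᴴ * ((v:ℂ) • W1)) + ((v:ℂ) • W2)ᴴ * ((v:ℂ) • W2) = 1
    rw [add_assoc, kraus_pair', kraus_pair', huu, hvv, T1, T2]
    push_cast
    module
  have hΛ2val : ∀ c : ℝ, (∑ i, K2 i * BD 0 0 c * (K2 i)ᴴ) = BD c1 (-(c1*c)) c := by
    intro c
    rw [Fin.sum_univ_four]
    show (((u:ℂ) • V1) * BD 0 0 c * ((u:ℂ) • V1)ᴴ + ((u:ℂ) • V2) * BD 0 0 c * ((u:ℂ) • V2)ᴴ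
        + ((v:ℂ) • W1) * BD 0 0 c * ((v:ℂ) • W1)ᴴ)
        + ((v:ℂ) • W2) * BD 0 0 c * ((v:ℂ) • W2)ᴴ = BD c1 (-(c1*c)) c
    rw [add_assoc, kraus_pair, kraus_pair, huu, hvv, E1, E2]
    exact mix c1 c
  have h1 : D (BD 0 0 c3) (BD 0 0 0) ≤ D (BD c1 (-(c1*c3)) c3) (BD c1 0 0) := by
    have h := hD _ hΛ1 _ _ hρ1 hρ2
    rw [hΛ1val, hΛ1val] at h
    exact h
  have h2 : D (BD c1 (-(c1*c3)) c3) (BD c1 0 0) ≤ D (BD 0 0 c3) (BD 0 0 0) := by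
    have h := hD _ hΛ2 _ _ hρ3 hρ4
    rw [hΛ2val, hΛ2val] at h
    have h0 : BD c1 (-(c1*0)) 0 = BD c1 0 0 := by norm_num
    rwa [h0] at h
  exact le_antisymm h2 h1
end
end

section
/- Let D be a contractive distance on two-qubit density matrices. Then for all c1, c3 ∈ [-1,1], D(ρ(c1, -c1·c3, c3), ρ(0, 0, c3)) = D(ρ(c1, 0, 0), ρ(0, 0, 0)). (Second translational invariance property of Theorem 1: the distance from a Bell-diagonal state on the phase-flip freezing surface to its projection onto the c3-axis is independent of c3.) -/
open Matrix Kronecker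
open scoped ComplexOrder

noncomputable section

/-! Both pairs of states are interconverted by channels. Resetting the `σ3 ⊗ σ3` correlation to
`c3` while keeping `σ1 ⊗ σ1` maps `ρ(c1, 0, 0)` and `ρ(0, 0, 0)` to `ρ(c1, -c1 c3, c3)` and
`ρ(0, 0, c3)`; twirling with the local bit flips `σ1 ⊗ 1` and `1 ⊗ σ1` erases the `σ2 ⊗ σ2` and
`σ3 ⊗ σ3` correlations and maps them back. Contractivity under both channels gives the two
inequalities. -/

def krausMap {n : ℕ} (K : Fin n → Mat4) (X : Mat4) : Mat4 :=
  ∑ i, K i * X * (K i)ᴴ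

lemma isCPTP_krausMap {n : ℕ} {K : Fin n → Mat4} (hK : ∑ i, (K i)ᴴ * K i = 1) :
    IsCPTP (krausMap K) :=
  ⟨n, K, hK, fun _ => rfl⟩

lemma IsCPTP.isDensityMatrix {Λ : Mat4 → Mat4} (hΛ : IsCPTP Λ) {ρ : Mat4}
    (hρ : IsDensityMatrix ρ) : IsDensityMatrix (Λ ρ) := by
  obtain ⟨n, K, hK, hΛK⟩ := hΛ
  obtain ⟨hpsd, htr⟩ := hρ
  rw [hΛK]
  refine ⟨posSemidef_sum _ fun i _ => hpsd.mul_mul_conjTranspose_same (K i), ?_⟩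
  calc (∑ i, K i * ρ * (K i)ᴴ).trace = (∑ i, (K i)ᴴ * K i * ρ).trace := by
        simp only [trace_sum]
        exact Finset.sum_congr rfl fun i _ => trace_mul_cycle (K i) ρ (K i)ᴴ
    _ = 1 := by rw [← Finset.sum_mul, hK, Matrix.one_mul, htr]

lemma Contractive.map_eq_of_recovery {D : Mat4 → Mat4 → ℝ} (hD : Contractive D)
    {Λ Λ' : Mat4 → Mat4} (hΛ : IsCPTP Λ) (hΛ' : IsCPTP Λ') {ρ σ : Mat4}
    (hρ : IsDensityMatrix ρ) (hσ : IsDensityMatrix σ)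
    (hρ' : Λ' (Λ ρ) = ρ) (hσ' : Λ' (Λ σ) = σ) :
    D (Λ ρ) (Λ σ) = D ρ σ := by
  refine le_antisymm (hD Λ hΛ ρ σ hρ hσ) ?_
  simpa only [hρ', hσ'] using
    hD Λ' hΛ' (Λ ρ) (Λ σ) (hΛ.isDensityMatrix hρ) (hΛ.isDensityMatrix hσ)

lemma posSemidef_one_add_smul_of_involution {n : Type*} [Fintype n] [DecidableEq n]
    {U : Matrix n n ℂ} (hUh : U.IsHermitian) (hU : U * U = 1) {c : ℝ}
    (hc : c ∈ Set.Icc (-1 : ℝ) 1) : (1 + (c : ℂ) • U).PosSemidef := by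
  have hplus : (1 + U)ᴴ * (1 + U) = (2 : ℂ) • (1 + U) := by
    simp only [conjTranspose_add, conjTranspose_one, hUh.eq, add_mul, mul_add, hU, Matrix.one_mul,
      Matrix.mul_one]
    module
  have hminus : (1 - U)ᴴ * (1 - U) = (2 : ℂ) • (1 - U) := by
    simp only [conjTranspose_sub, conjTranspose_one, hUh.eq, sub_mul, mul_sub, hU, Matrix.one_mul,
      Matrix.mul_one]
    module
  have hdecomp : 1 + (c : ℂ) • U = (((1 + c) / 4 : ℝ) : ℂ) • ((1 + U)ᴴ * (1 + U))
      + (((1 - c) / 4 : ℝ) : ℂ) • ((1 - U)ᴴ * (1 - U)) := by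
    rw [hplus, hminus]
    push_cast
    module
  obtain ⟨hc₁, hc₂⟩ := hc
  rw [hdecomp]
  exact ((posSemidef_conjTranspose_mul_self _).smul (by norm_cast; linarith)).add
    ((posSemidef_conjTranspose_mul_self _).smul (by norm_cast; linarith))

lemma σ1_isHermitian : σ1.IsHermitian := by
  ext i j; fin_cases i <;> fin_cases j <;> simp [σ1]

lemma σ1_mul_self : σ1 * σ1 = 1 := by
  ext i j; fin_cases i <;> fin_cases j <;> simp [σ1]

lemma trace_BD (c1 c2 c3 : ℝ) : (BD c1 c2 c3).trace = 1 := by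
  simp [BD, Matrix.trace, Fintype.sum_prod_type, σ1, σ2, σ3]
  ring

lemma isDensityMatrix_BD_zero_zero {c : ℝ} (hc : c ∈ Set.Icc (-1 : ℝ) 1) :
    IsDensityMatrix (BD c 0 0) := by
  have hXX : (σ1 ⊗ₖ σ1).IsHermitian := by
    rw [IsHermitian, conjTranspose_kronecker, σ1_isHermitian.eq]
  have hXX2 : σ1 ⊗ₖ σ1 * σ1 ⊗ₖ σ1 = 1 := by
    rw [← mul_kronecker_mul, σ1_mul_self, one_kronecker_one]
  refine ⟨?_, trace_BD c 0 0⟩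
  have h : BD c 0 0 = (1 / 4 : ℂ) • (1 + (c : ℂ) • (σ1 ⊗ₖ σ1)) := by simp [BD]
  rw [h]
  exact (posSemidef_one_add_smul_of_involution hXX hXX2 hc).smul (by norm_num [Complex.le_def])

/- Conjugation by `σ1 ⊗ₖ 1` or `1 ⊗ₖ σ1` fixes `σ1 ⊗ₖ σ1` and flips the signs of `σ2 ⊗ₖ σ2` and
`σ3 ⊗ₖ σ3`, so averaging over these bit flips keeps only the `c1` component of a Bell-diagonal
state. -/
def bitFlipTwirl : Fin 4 → Mat4 :=
  ![(1 / 2 : ℂ) • 1, (1 / 2 : ℂ) • (σ1 ⊗ₖ 1), (1 / 2 : ℂ) • (1 ⊗ₖ σ1), (1 / 2 : ℂ) • (σ1 ⊗ₖ σ1)]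

lemma sum_bitFlipTwirl : ∑ i, (bitFlipTwirl i)ᴴ * bitFlipTwirl i = 1 := by
  simp only [bitFlipTwirl, Fin.sum_univ_four, Matrix.cons_val, conjTranspose_smul,
    conjTranspose_kronecker, conjTranspose_one, σ1_isHermitian.eq, smul_mul_smul,
    ← mul_kronecker_mul, σ1_mul_self, Matrix.one_mul, one_kronecker_one, star_div₀, star_one,
    star_ofNat]
  module

lemma krausMap_bitFlipTwirl_BD (a b c : ℝ) : krausMap bitFlipTwirl (BD a b c) = BD a 0 0 := by
  ext ⟨x, y⟩ ⟨z, w⟩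
  simp only [krausMap, Fin.sum_univ_four, bitFlipTwirl, BD, Matrix.cons_val,
    Matrix.smul_mul, Matrix.mul_smul, Matrix.add_apply, Matrix.smul_apply, Matrix.sum_apply,
    Matrix.mul_apply, Fintype.sum_prod_type, Fin.sum_univ_two, kroneckerMap_apply,
    conjTranspose_apply, Matrix.one_apply, σ1, σ2, σ3, smul_eq_mul]
  fin_cases x <;> fin_cases y <;> fin_cases z <;> fin_cases w <;> simp <;> ring

lemma sqrt_smul_mul_mul_conjTranspose_sqrt_smul {n : Type*} [Fintype n] {q : ℝ} (hq : 0 ≤ q)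
    (A X : Matrix n n ℂ) :
    ((√q : ℂ) • A) * X * ((√q : ℂ) • A)ᴴ = (q : ℂ) • (A * X * Aᴴ) := by
  rw [conjTranspose_smul, Matrix.smul_mul, Matrix.smul_mul, Matrix.mul_smul, smul_smul,
    Complex.star_def, Complex.conj_ofReal, ← Complex.ofReal_mul, Real.mul_self_sqrt hq]

lemma conjTranspose_sqrt_smul_mul_sqrt_smul {n : Type*} [Fintype n] {q : ℝ} (hq : 0 ≤ q)
    (A : Matrix n n ℂ) :
    ((√q : ℂ) • A)ᴴ * ((√q : ℂ) • A) = (q : ℂ) • (Aᴴ * A) := by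
  rw [conjTranspose_smul, Matrix.smul_mul, Matrix.mul_smul, smul_smul,
    Complex.star_def, Complex.conj_ofReal, ← Complex.ofReal_mul, Real.mul_self_sqrt hq]

/- With probability `(1 ± c) / 2` the state is moved into the `±1` eigenspace of `σ3 ⊗ₖ σ3`, by
projecting directly or after the flip `σ1 ⊗ₖ 1`, which anticommutes with `σ3 ⊗ₖ σ3` and commutes
with `σ1 ⊗ₖ σ1`. So `ρ(c1, 0, 0)` gets multiplied by `1 + c • σ3 ⊗ₖ σ3`, and
`(σ1 ⊗ₖ σ1) * (σ3 ⊗ₖ σ3) = -(σ2 ⊗ₖ σ2)` yields the component `-(c1 * c)`. -/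
def zzResetKraus (c : ℝ) : Fin 4 → Mat4 :=
  ![(√((1 + c) / 2) : ℂ) • ((1 / 2 : ℂ) • (1 + σ3 ⊗ₖ σ3)),
    (√((1 + c) / 2) : ℂ) • ((1 / 2 : ℂ) • (1 + σ3 ⊗ₖ σ3) * (σ1 ⊗ₖ 1)),
    (√((1 - c) / 2) : ℂ) • ((1 / 2 : ℂ) • (1 - σ3 ⊗ₖ σ3)),
    (√((1 - c) / 2) : ℂ) • ((1 / 2 : ℂ) • (1 - σ3 ⊗ₖ σ3) * (σ1 ⊗ₖ 1))]

lemma sum_zzResetKraus {c : ℝ} (hc : c ∈ Set.Icc (-1 : ℝ) 1) :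
    ∑ i, (zzResetKraus c i)ᴴ * zzResetKraus c i = 1 := by
  have hp : 0 ≤ (1 + c) / 2 := by linarith [hc.1]
  have hm : 0 ≤ (1 - c) / 2 := by linarith [hc.2]
  simp only [zzResetKraus, Fin.sum_univ_four, Matrix.cons_val,
    conjTranspose_sqrt_smul_mul_sqrt_smul hp, conjTranspose_sqrt_smul_mul_sqrt_smul hm]
  ext ⟨x, y⟩ ⟨z, w⟩
  simp only [Matrix.add_apply, Matrix.smul_apply, Matrix.sub_apply, conjTranspose_smul,
    Matrix.smul_mul, Matrix.mul_smul, Matrix.mul_apply, Fintype.sum_prod_type, Fin.sum_univ_two,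
    kroneckerMap_apply, conjTranspose_apply, Matrix.one_apply, σ1, σ3, smul_eq_mul]
  fin_cases x <;> fin_cases y <;> fin_cases z <;> fin_cases w <;> simp <;> ring

lemma krausMap_zzResetKraus_BD {c3 : ℝ} (hc3 : c3 ∈ Set.Icc (-1 : ℝ) 1) (c1 : ℝ) :
    krausMap (zzResetKraus c3) (BD c1 0 0) = BD c1 (-(c1 * c3)) c3 := by
  have hp : 0 ≤ (1 + c3) / 2 := by linarith [hc3.1]
  have hm : 0 ≤ (1 - c3) / 2 := by linarith [hc3.2]
  simp only [krausMap, zzResetKraus, Fin.sum_univ_four, Matrix.cons_val,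
    sqrt_smul_mul_mul_conjTranspose_sqrt_smul hp, sqrt_smul_mul_mul_conjTranspose_sqrt_smul hm]
  ext ⟨x, y⟩ ⟨z, w⟩
  simp only [BD, Matrix.add_apply, Matrix.smul_apply, Matrix.sub_apply, conjTranspose_smul,
    Matrix.smul_mul, Matrix.mul_smul, Matrix.mul_apply, Fintype.sum_prod_type, Fin.sum_univ_two,
    kroneckerMap_apply, conjTranspose_apply, Matrix.one_apply, σ1, σ2, σ3, smul_eq_mul]
  fin_cases x <;> fin_cases y <;> fin_cases z <;> fin_cases w <;> simp <;> ring

/-- Second translational invariance property of Theorem 1. -/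
theorem freezing_translation_invariance_c3
    (D : Mat4 → Mat4 → ℝ) (hD : Contractive D)
    (c1 c3 : ℝ) (hc1 : c1 ∈ Set.Icc (-1 : ℝ) 1) (hc3 : c3 ∈ Set.Icc (-1 : ℝ) 1) :
    D (BD c1 (-(c1 * c3)) c3) (BD 0 0 c3) = D (BD c1 0 0) (BD 0 0 0) := by
  have hreset₀ : krausMap (zzResetKraus c3) (BD 0 0 0) = BD 0 0 c3 := by
    simpa using krausMap_zzResetKraus_BD hc3 0
  rw [← krausMap_zzResetKraus_BD hc3 c1, ← hreset₀]
  refine hD.map_eq_of_recovery (isCPTP_krausMap (sum_zzResetKraus hc3))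
    (isCPTP_krausMap sum_bitFlipTwirl) (isDensityMatrix_BD_zero_zero hc1)
    (isDensityMatrix_BD_zero_zero ⟨by norm_num, by norm_num⟩) ?_ ?_ <;>
  rw [krausMap_zzResetKraus_BD hc3, krausMap_bitFlipTwirl_BD]
end
end

section
/- Let D be a contractive distance on two-qubit density matrices. Let c1, c3 ∈ [-1,1] and let x be a real number with c1 + x ∈ [-1,1]. Then D(ρ(c1,-c1·c3,c3), ρ(c1,0,0)) ≤ D(ρ(c1,-c1·c3,c3), ρ(c1+x,0,0)). That is, among BD classical states on the c1-axis, the closest one to the freezing-surface state ρ(c1,-c1·c3,c3) is its orthogonal projection ρ(c1,0,0). -/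
open Matrix Kronecker
open scoped ComplexOrder

noncomputable section

/-!
Measure both qubits in the computational basis and prepare `ρ(c1,-c1,1)` on the even-parity
outcomes, `ρ(c1,c1,-1)` on the odd-parity ones. A Bell-diagonal state `ρ(a,b,c)` gives even
parity with probability `(1+c)/2`, so this channel sends it to
`(1+c)/2 · ρ(c1,-c1,1) + (1-c)/2 · ρ(c1,c1,-1) = ρ(c1,-c1·c,c)`: it fixes `ρ(c1,-c1·c3,c3)` and
maps `ρ(c1+x,0,0)` to `ρ(c1,0,0)`, and contractivity of `D` under it is the claim.
The channel is CPTP because every prepared state factors as `BᴴB`, and then the matrices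
`Bᴴ |k⟩⟨j|` are Kraus operators for it.
-/

open scoped MatrixOrder

theorem isCPTP_of_kraus {ι : Type*} [Fintype ι] (K : ι → Mat4)
    (hK : ∑ i, (K i)ᴴ * K i = 1) : IsCPTP fun X => ∑ i, K i * X * (K i)ᴴ := by
  let e := Fintype.equivFin ι
  refine ⟨Fintype.card ι, K ∘ e.symm, ?_, fun X => ?_⟩
  · rw [← hK]
    exact e.symm.sum_comp fun i => (K i)ᴴ * K i
  · exact (e.symm.sum_comp fun i => K i * X * (K i)ᴴ).symm

section MeasurePrepare

variable {n : Type*} [Fintype n] [DecidableEq n]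

def measurePrepare (τ : n → Matrix n n ℂ) (X : Matrix n n ℂ) : Matrix n n ℂ :=
  ∑ j, X j j • τ j

def measurePrepareKraus (B : n → Matrix n n ℂ) (jk : n × n) : Matrix n n ℂ :=
  (B jk.1)ᴴ * single jk.2 jk.1 1

theorem sum_single_self_one : ∑ k : n, single k k (1 : ℂ) = 1 := by
  ext i j
  by_cases h : i = j <;> simp [Matrix.sum_apply, single_apply, one_apply, h]

omit [Fintype n] in
theorem single_eq_smul_single_one (i j : n) (c : ℂ) : single i j c = c • single i j 1 := by
  rw [smul_single, smul_eq_mul, mul_one]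

theorem measurePrepareKraus_mul_mul_conjTranspose (B : n → Matrix n n ℂ) (X : Matrix n n ℂ)
    (j k : n) :
    measurePrepareKraus B (j, k) * X * (measurePrepareKraus B (j, k))ᴴ
      = X j j • ((B j)ᴴ * single k k 1 * B j) := by
  calc measurePrepareKraus B (j, k) * X * (measurePrepareKraus B (j, k))ᴴ
      = (B j)ᴴ * (single k j 1 * X * single j k 1) * B j := by
        simp only [measurePrepareKraus, conjTranspose_mul, conjTranspose_conjTranspose,
          conjTranspose_single, star_one, mul_assoc]
    _ = X j j • ((B j)ᴴ * single k k 1 * B j) := by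
        rw [single_mul_mul_single, one_mul, mul_one, single_eq_smul_single_one, Matrix.mul_smul,
          Matrix.smul_mul]

theorem conjTranspose_measurePrepareKraus_mul_self (B : n → Matrix n n ℂ) (j k : n) :
    (measurePrepareKraus B (j, k))ᴴ * measurePrepareKraus B (j, k)
      = (B j * (B j)ᴴ) k k • single j j 1 := by
  rw [measurePrepareKraus, conjTranspose_mul, conjTranspose_conjTranspose, conjTranspose_single,
    star_one, ← mul_assoc, mul_assoc _ (B j), single_mul_mul_single, one_mul, mul_one,
    single_eq_smul_single_one]

theorem measurePrepare_eq_sum_kraus (B : n → Matrix n n ℂ) (X : Matrix n n ℂ) :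
    measurePrepare (fun j => (B j)ᴴ * B j) X
      = ∑ jk, measurePrepareKraus B jk * X * (measurePrepareKraus B jk)ᴴ := by
  simp only [measurePrepare, Fintype.sum_prod_type, measurePrepareKraus_mul_mul_conjTranspose,
    ← Finset.smul_sum, ← Finset.sum_mul, ← Finset.mul_sum, sum_single_self_one, mul_one]

theorem sum_conjTranspose_measurePrepareKraus_mul_self (B : n → Matrix n n ℂ) :
    ∑ jk, (measurePrepareKraus B jk)ᴴ * measurePrepareKraus B jk
      = ∑ j, ((B j)ᴴ * B j).trace • single j j 1 := by
  simp only [Fintype.sum_prod_type, conjTranspose_measurePrepareKraus_mul_self,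
    ← Finset.sum_smul, trace_mul_comm (B _)ᴴ]
  rfl

end MeasurePrepare

theorem isCPTP_measurePrepare (τ : Fin 2 × Fin 2 → Mat4) (hτ : ∀ j, IsDensityMatrix (τ j)) :
    IsCPTP (measurePrepare τ) := by
  choose B hB using fun j => CStarAlgebra.nonneg_iff_eq_star_mul_self.mp (hτ j).1.nonneg
  have htrace : ∀ j, ((B j)ᴴ * B j).trace = 1 := fun j => hB j ▸ (hτ j).2
  obtain rfl : τ = fun j => (B j)ᴴ * B j := funext hB
  rw [funext (measurePrepare_eq_sum_kraus B)]
  refine isCPTP_of_kraus _ ?_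
  rw [sum_conjTranspose_measurePrepareKraus_mul_self]
  simp only [htrace, one_smul, sum_single_self_one]

/-- Unnormalised Bell vectors `Φ⁺, Φ⁻, Ψ⁺, Ψ⁻`. -/
def bellVec : Fin 4 → Fin 2 × Fin 2 → ℂ :=
  ![fun p => if p.1 = p.2 then 1 else 0,
    fun p => if p.1 = p.2 then (if p.1 = 0 then 1 else -1) else 0,
    fun p => if p.1 = p.2 then 0 else 1,
    fun p => if p.1 = p.2 then 0 else (if p.1 = 0 then 1 else -1)]

theorem BD_eq_sum_bellVec (a b c : ℝ) : BD a b c =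
    (((1 + a - b + c) / 8 : ℝ) : ℂ) • vecMulVec (bellVec 0) (star (bellVec 0))
    + (((1 - a + b + c) / 8 : ℝ) : ℂ) • vecMulVec (bellVec 1) (star (bellVec 1))
    + (((1 + a + b - c) / 8 : ℝ) : ℂ) • vecMulVec (bellVec 2) (star (bellVec 2))
    + (((1 - a - b - c) / 8 : ℝ) : ℂ) • vecMulVec (bellVec 3) (star (bellVec 3)) := by
  ext ⟨i, j⟩ ⟨k, l⟩
  fin_cases i <;> fin_cases j <;> fin_cases k <;> fin_cases l <;>
    · try simp [BD, bellVec, σ1, σ2, σ3, one_apply, vecMulVec_apply, Prod.ext_iff]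
      try norm_num [Complex.ext_iff] <;> ring

theorem isDensityMatrix_BD {a b c : ℝ} (h0 : 0 ≤ 1 + a - b + c) (h1 : 0 ≤ 1 - a + b + c)
    (h2 : 0 ≤ 1 + a + b - c) (h3 : 0 ≤ 1 - a - b - c) : IsDensityMatrix (BD a b c) := by
  have hterm (r : ℝ) (hr : 0 ≤ r) (k : Fin 4) :
      ((r / 8 : ℝ) : ℂ) • vecMulVec (bellVec k) (star (bellVec k)) |>.PosSemidef :=
    (posSemidef_vecMulVec_self_star _).smul (by positivity)
  refine ⟨?_, ?_⟩
  · rw [BD_eq_sum_bellVec]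
    exact (((hterm _ h0 0).add (hterm _ h1 1)).add (hterm _ h2 2)).add (hterm _ h3 3)
  · simp [BD, trace, Fintype.sum_prod_type, σ1, σ2, σ3, one_apply]
    ring

theorem measurePrepare_parity_BD (p q : Mat4) (a b c : ℝ) :
    measurePrepare (fun j : Fin 2 × Fin 2 => if j.1 = j.2 then p else q) (BD a b c)
      = ((1 + c) / 2 : ℂ) • p + ((1 - c) / 2 : ℂ) • q := by
  simp [measurePrepare, Fintype.sum_prod_type, BD, σ1, σ2, σ3, one_apply]
  module

theorem BD_mix_parity (a c : ℝ) :
    ((1 + c) / 2 : ℂ) • BD a (-a) 1 + ((1 - c) / 2 : ℂ) • BD a a (-1) = BD a (-(a * c)) c := by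
  simp only [BD]
  push_cast
  module

/-- among BD classical states on the c1-axis, the closest one to
ρ(c1,-c1·c3,c3) is its orthogonal projection ρ(c1,0,0). -/
theorem closest_on_c1_axis_is_projection
    (D : Mat4 → Mat4 → ℝ) (hD : Contractive D)
    (c1 c3 x : ℝ) (hc1 : c1 ∈ Set.Icc (-1 : ℝ) 1) (hc3 : c3 ∈ Set.Icc (-1 : ℝ) 1)
    (hx : c1 + x ∈ Set.Icc (-1 : ℝ) 1) :
    D (BD c1 (-(c1 * c3)) c3) (BD c1 0 0)
      ≤ D (BD c1 (-(c1 * c3)) c3) (BD (c1 + x) 0 0) := by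
  obtain ⟨hc1l, hc1u⟩ := hc1
  obtain ⟨hc3l, hc3u⟩ := hc3
  obtain ⟨hxl, hxu⟩ := hx
  let Λ := measurePrepare fun j : Fin 2 × Fin 2 =>
    if j.1 = j.2 then BD c1 (-c1) 1 else BD c1 c1 (-1)
  have hΛ (a b c : ℝ) : Λ (BD a b c) = BD c1 (-(c1 * c)) c :=
    (measurePrepare_parity_BD _ _ a b c).trans (BD_mix_parity c1 c)
  have hΛ_cptp : IsCPTP Λ := isCPTP_measurePrepare _ fun j => by
    split_ifs <;>
      exact isDensityMatrix_BD (by linarith) (by linarith) (by linarith) (by linarith)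
  have hcontract := hD Λ hΛ_cptp (BD c1 (-(c1 * c3)) c3) (BD (c1 + x) 0 0)
    (isDensityMatrix_BD (by nlinarith) (by nlinarith) (by nlinarith) (by nlinarith))
    (isDensityMatrix_BD (by linarith) (by linarith) (by linarith) (by linarith))
  rwa [hΛ, hΛ, mul_zero, neg_zero] at hcontract
end
end

section
/- Let D be a contractive distance on two-qubit density matrices. Let c1, c3 ∈ [-1,1] and y ∈ [-1,1]. Then D(ρ(c1,-c1·c3,c3), ρ(c1,0,0)) ≤ D(ρ(c1,-c1·c3,c3), ρ(0,y,0)). That is, the orthogonal projection of the freezing-surface state onto the c1-axis is closer to it than any BD classical state on the c2-axis. -/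
open Matrix Kronecker
open scoped ComplexOrder

noncomputable section

/-! ### Auxiliary machinery for the proof -/

section Aux

lemma sqrt_mul_self_c (p : ℝ) (hp : 0 ≤ p) :
    (Real.sqrt p : ℂ) * (Real.sqrt p : ℂ) = (p : ℂ) := by
  rw [← Complex.ofReal_mul, Real.mul_self_sqrt hp]

lemma psd_proj (v : Fin 2 × Fin 2 → ℂ) :
    (Matrix.vecMulVec v (star v)).PosSemidef := by
  have h := Matrix.posSemidef_conjTranspose_mul_self (Matrix.replicateRow Unit (star v))
  convert h using 1
  ext j k
  simp [Matrix.mul_apply, Matrix.vecMulVec_apply, Matrix.replicateRow_apply, mul_comm]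

lemma psd_smul_proj (p : ℝ) (hp : 0 ≤ p) (v : Fin 2 × Fin 2 → ℂ) :
    ((p : ℂ) • Matrix.vecMulVec v (star v)).PosSemidef := by
  have h := psd_proj ((Real.sqrt p : ℂ) • v)
  convert h using 1
  ext j k
  simp only [Matrix.vecMulVec_apply, Matrix.smul_apply, Pi.smul_apply, Pi.star_apply,
    smul_eq_mul, star_mul', Complex.star_def, Complex.conj_ofReal]
  rw [← sqrt_mul_self_c p hp]
  ring

lemma vmv_dag_mul (u a : Fin 2 × Fin 2 → ℂ) :
    (Matrix.vecMulVec u a)ᴴ * Matrix.vecMulVec u a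
      = (star u ⬝ᵥ u) • Matrix.vecMulVec (star a) a := by
  ext j k
  simp only [Matrix.mul_apply, Matrix.conjTranspose_apply, Matrix.vecMulVec_apply,
    Matrix.smul_apply, dotProduct, Pi.star_apply, smul_eq_mul, star_mul',
    Finset.sum_mul, Finset.mul_sum]
  exact Finset.sum_congr rfl fun m _ => by ring

lemma vmv_sandwich (w b : Fin 2 × Fin 2 → ℂ) (X : Mat4) :
    Matrix.vecMulVec w b * X * (Matrix.vecMulVec w b)ᴴ
      = (b ⬝ᵥ (X *ᵥ star b)) • Matrix.vecMulVec w (star w) := by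
  ext j k
  simp only [Matrix.mul_apply, Matrix.conjTranspose_apply, Matrix.vecMulVec_apply,
    Matrix.smul_apply, dotProduct, Matrix.mulVec, Pi.star_apply, smul_eq_mul,
    star_mul', Finset.sum_mul, Finset.mul_sum]
  rw [Finset.sum_comm]
  exact Finset.sum_congr rfl fun m _ => Finset.sum_congr rfl fun n _ => by ring

/-- A vector on the two-qubit index set, given by a 2×2 table. -/
def vv (M : Mat2) : Fin 2 × Fin 2 → ℂ := fun p => M p.1 p.2

def w1 := vv !![1,0;0,1]
def w2 := vv !![1,0;0,-1]
def w3 := vv !![0,1;1,0]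
def w4 := vv !![0,1;-1,0]
def b00 := vv !![1,0;0,0]
def b11 := vv !![0,0;0,1]
def b01 := vv !![0,1;0,0]
def b10 := vv !![0,0;1,0]

/-- Bell decomposition of a Bell-diagonal state. -/
lemma BD_decomp (x1 x2 x3 : ℝ) :
    BD x1 x2 x3 = (((1+x1-x2+x3)/8 : ℝ) : ℂ) • Matrix.vecMulVec w1 (star w1)
      + (((1-x1+x2+x3)/8 : ℝ) : ℂ) • Matrix.vecMulVec w2 (star w2)
      + (((1+x1+x2-x3)/8 : ℝ) : ℂ) • Matrix.vecMulVec w3 (star w3)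
      + (((1-x1-x2-x3)/8 : ℝ) : ℂ) • Matrix.vecMulVec w4 (star w4) := by
  ext ⟨i,j⟩ ⟨k,l⟩
  fin_cases i <;> fin_cases j <;> fin_cases k <;> fin_cases l <;>
    simp [BD, σ1, σ2, σ3, w1, w2, w3, w4, vv, Matrix.vecMulVec_apply, Matrix.one_apply] <;>
    first | decide | (ring_nf <;> simp [Complex.ext_iff] <;> ring)

lemma BD_psd (x1 x2 x3 : ℝ) (h1 : 0 ≤ 1+x1-x2+x3) (h2 : 0 ≤ 1-x1+x2+x3)
    (h3 : 0 ≤ 1+x1+x2-x3) (h4 : 0 ≤ 1-x1-x2-x3) : (BD x1 x2 x3).PosSemidef := by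
  rw [BD_decomp]
  exact (((psd_smul_proj _ (by linarith) w1).add (psd_smul_proj _ (by linarith) w2)).add
    (psd_smul_proj _ (by linarith) w3)).add (psd_smul_proj _ (by linarith) w4)

lemma BD_trace_s7 (x1 x2 x3 : ℝ) : (BD x1 x2 x3).trace = 1 := by
  simp [Matrix.trace, BD, σ1, σ2, σ3, Matrix.diag, Fintype.sum_prod_type, Fin.sum_univ_two,
    Matrix.one_apply]
  ring

/-- Kraus operators of the channel: measure the σ3⊗σ3 parity, keep it, and refresh
the σ1⊗σ1 bit with bias `c1`. -/
def KR (c1 : ℝ) : Fin 8 → Mat4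
  | 0 => (Real.sqrt ((1+c1)/4) : ℂ) • Matrix.vecMulVec w1 b00
  | 1 => (Real.sqrt ((1+c1)/4) : ℂ) • Matrix.vecMulVec w1 b11
  | 2 => (Real.sqrt ((1-c1)/4) : ℂ) • Matrix.vecMulVec w2 b00
  | 3 => (Real.sqrt ((1-c1)/4) : ℂ) • Matrix.vecMulVec w2 b11
  | 4 => (Real.sqrt ((1+c1)/4) : ℂ) • Matrix.vecMulVec w3 b01
  | 5 => (Real.sqrt ((1+c1)/4) : ℂ) • Matrix.vecMulVec w3 b10
  | 6 => (Real.sqrt ((1-c1)/4) : ℂ) • Matrix.vecMulVec w4 b01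
  | 7 => (Real.sqrt ((1-c1)/4) : ℂ) • Matrix.vecMulVec w4 b10

lemma dot_w1 : star w1 ⬝ᵥ w1 = 2 := by
  simp [dotProduct, Fintype.sum_prod_type, Fin.sum_univ_two, w1, vv]; norm_num
lemma dot_w2 : star w2 ⬝ᵥ w2 = 2 := by
  simp [dotProduct, Fintype.sum_prod_type, Fin.sum_univ_two, w2, vv]; norm_num
lemma dot_w3 : star w3 ⬝ᵥ w3 = 2 := by
  simp [dotProduct, Fintype.sum_prod_type, Fin.sum_univ_two, w3, vv]; norm_num
lemma dot_w4 : star w4 ⬝ᵥ w4 = 2 := by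
  simp [dotProduct, Fintype.sum_prod_type, Fin.sum_univ_two, w4, vv]; norm_num

lemma dot_b00 (x1 x2 x3 : ℝ) :
    b00 ⬝ᵥ (BD x1 x2 x3 *ᵥ star b00) = (((1+x3)/4 : ℝ) : ℂ) := by
  simp [dotProduct, Matrix.mulVec, Fintype.sum_prod_type, Fin.sum_univ_two,
    b00, vv, BD, σ1, σ2, σ3, Matrix.one_apply]
  push_cast; ring
lemma dot_b11 (x1 x2 x3 : ℝ) :
    b11 ⬝ᵥ (BD x1 x2 x3 *ᵥ star b11) = (((1+x3)/4 : ℝ) : ℂ) := by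
  simp [dotProduct, Matrix.mulVec, Fintype.sum_prod_type, Fin.sum_univ_two,
    b11, vv, BD, σ1, σ2, σ3, Matrix.one_apply]
  push_cast; ring
lemma dot_b01 (x1 x2 x3 : ℝ) :
    b01 ⬝ᵥ (BD x1 x2 x3 *ᵥ star b01) = (((1-x3)/4 : ℝ) : ℂ) := by
  simp [dotProduct, Matrix.mulVec, Fintype.sum_prod_type, Fin.sum_univ_two,
    b01, vv, BD, σ1, σ2, σ3, Matrix.one_apply]
  push_cast; ring
lemma dot_b10 (x1 x2 x3 : ℝ) :
    b10 ⬝ᵥ (BD x1 x2 x3 *ᵥ star b10) = (((1-x3)/4 : ℝ) : ℂ) := by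
  simp [dotProduct, Matrix.mulVec, Fintype.sum_prod_type, Fin.sum_univ_two,
    b10, vv, BD, σ1, σ2, σ3, Matrix.one_apply]
  push_cast; ring

set_option maxRecDepth 8000 in
lemma KR_tp (c1 : ℝ) (hl : (-1:ℝ) ≤ c1) (hr : c1 ≤ 1) :
    (∑ i, (KR c1 i)ᴴ * KR c1 i) = 1 := by
  have e1 : (Real.sqrt ((1+c1)/4) : ℂ) * (Real.sqrt ((1+c1)/4) : ℂ) = (((1+c1)/4 : ℝ) : ℂ) :=
    sqrt_mul_self_c _ (by linarith)
  have e2 : (Real.sqrt ((1-c1)/4) : ℂ) * (Real.sqrt ((1-c1)/4) : ℂ) = (((1-c1)/4 : ℝ) : ℂ) :=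
    sqrt_mul_self_c _ (by linarith)
  simp only [Fin.sum_univ_eight, KR]
  simp only [Matrix.conjTranspose_smul, Matrix.smul_mul, Matrix.mul_smul, smul_smul]
  simp only [Complex.star_def, Complex.conj_ofReal, vmv_dag_mul, dot_w1, dot_w2, dot_w3,
    dot_w4, e1, e2]
  ext ⟨i,j⟩ ⟨k,l⟩
  fin_cases i <;> fin_cases j <;> fin_cases k <;> fin_cases l <;>
    simp [b00, b01, b10, b11, vv, Matrix.vecMulVec_apply, Matrix.one_apply] <;>
    first | decide | simp [Prod.ext_iff] | (push_cast; ring)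

set_option maxRecDepth 8000 in
lemma KR_map (c1 : ℝ) (hl : (-1:ℝ) ≤ c1) (hr : c1 ≤ 1) (x1 x2 x3 : ℝ) :
    (∑ i, KR c1 i * BD x1 x2 x3 * (KR c1 i)ᴴ) = BD c1 (-(c1 * x3)) x3 := by
  have e1 : (Real.sqrt ((1+c1)/4) : ℂ) * (Real.sqrt ((1+c1)/4) : ℂ) = (((1+c1)/4 : ℝ) : ℂ) :=
    sqrt_mul_self_c _ (by linarith)
  have e2 : (Real.sqrt ((1-c1)/4) : ℂ) * (Real.sqrt ((1-c1)/4) : ℂ) = (((1-c1)/4 : ℝ) : ℂ) :=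
    sqrt_mul_self_c _ (by linarith)
  simp only [Fin.sum_univ_eight, KR]
  simp only [Matrix.conjTranspose_smul, Matrix.smul_mul, Matrix.mul_smul, smul_smul]
  simp only [Complex.star_def, Complex.conj_ofReal, vmv_sandwich, dot_b00, dot_b11,
    dot_b01, dot_b10, e1, e2]
  rw [BD_decomp]
  ext ⟨i,j⟩ ⟨k,l⟩
  fin_cases i <;> fin_cases j <;> fin_cases k <;> fin_cases l <;>
    simp [w1, w2, w3, w4, vv, Matrix.vecMulVec_apply] <;>
    first | decide | simp [Prod.ext_iff] | (push_cast; ring)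

end Aux

/-- the projection onto the c1-axis is closer to the freezing-surface state
than any BD classical state on the c2-axis. -/
theorem c1_projection_closer_than_c2_axis
    (D : Mat4 → Mat4 → ℝ) (hD : Contractive D)
    (c1 c3 y : ℝ) (hc1 : c1 ∈ Set.Icc (-1 : ℝ) 1) (hc3 : c3 ∈ Set.Icc (-1 : ℝ) 1)
    (hy : y ∈ Set.Icc (-1 : ℝ) 1) :
    D (BD c1 (-(c1 * c3)) c3) (BD c1 0 0) ≤ D (BD c1 (-(c1 * c3)) c3) (BD 0 y 0) := by
  obtain ⟨h1l, h1r⟩ := hc1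
  obtain ⟨h3l, h3r⟩ := hc3
  obtain ⟨hyl, hyr⟩ := hy
  have hmul1 : (0:ℝ) ≤ (1+c1) * (1+c3) := mul_nonneg (by linarith) (by linarith)
  have hmul2 : (0:ℝ) ≤ (1-c1) * (1+c3) := mul_nonneg (by linarith) (by linarith)
  have hmul3 : (0:ℝ) ≤ (1+c1) * (1-c3) := mul_nonneg (by linarith) (by linarith)
  have hmul4 : (0:ℝ) ≤ (1-c1) * (1-c3) := mul_nonneg (by linarith) (by linarith)
  have hv : IsDensityMatrix (BD c1 (-(c1 * c3)) c3) :=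
    ⟨BD_psd _ _ _ (by nlinarith) (by nlinarith) (by nlinarith) (by nlinarith), BD_trace_s7 _ _ _⟩
  have hw : IsDensityMatrix (BD 0 y 0) :=
    ⟨BD_psd _ _ _ (by linarith) (by linarith) (by linarith) (by linarith), BD_trace_s7 _ _ _⟩
  have hcptp : IsCPTP (fun X => ∑ i, KR c1 i * X * (KR c1 i)ᴴ) :=
    ⟨8, KR c1, KR_tp c1 h1l h1r, fun X => rfl⟩
  have h := hD _ hcptp _ _ hv hw
  rw [KR_map c1 h1l h1r, KR_map c1 h1l h1r] at h
  simpa using h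
end
end

section
/- Let D be a contractive distance on two-qubit density matrices. Then for every q ∈ [0,1] and every c1 ∈ [-1,1], D(ρ(q·c1,0,0), ρ(0,0,0)) ≤ D(ρ(c1,0,0), ρ(0,0,0)), where ρ(0,0,0) = I4/4 is the maximally mixed state. -/
open Matrix Kronecker
open scoped ComplexOrder

noncomputable section

/-!
Dephasing the first qubit, `X ↦ p X + (1 - p) Z₁ X Z₁` with `Z₁ = σ₃ ⊗ 1` and `p = (1 + q) / 2`,
is a CPTP map. It fixes the identity, and since `Z₁` anticommutes with `σ₁ ⊗ σ₁` it scales that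
operator by `2p - 1 = q`; hence it sends `ρ(c₁,0,0)` to `ρ(q c₁,0,0)` and the maximally mixed state
to itself, and contractivity of `D` gives the inequality.
-/

section Involution

variable {n : Type*} [Fintype n] [DecidableEq n] {S : Matrix n n ℂ}

lemma posSemidef_one_add_of_involutive (hS : Sᴴ = S) (hS2 : S * S = 1) :
    (1 + S).PosSemidef := by
  have hsq : (1 + S)ᴴ * (1 + S) = (2 : ℝ) • (1 + S) := by
    rw [conjTranspose_add, conjTranspose_one, hS, add_mul, one_mul, mul_add, mul_one, hS2]
    module
  have h := (posSemidef_conjTranspose_mul_self (1 + S)).smul (a := (1 / 2 : ℝ)) (by norm_num)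
  rwa [hsq, smul_smul, one_div_mul_cancel two_ne_zero, one_smul] at h

lemma posSemidef_one_add_smul_of_involutive (hS : Sᴴ = S) (hS2 : S * S = 1) {a : ℝ}
    (ha : a ∈ Set.Icc (-1 : ℝ) 1) : (1 + (a : ℂ) • S).PosSemidef := by
  have hplus := posSemidef_one_add_of_involutive hS hS2
  have hminus := posSemidef_one_add_of_involutive (S := -S) (by rw [conjTranspose_neg, hS])
    (by rw [neg_mul_neg, hS2])
  have hsplit : 1 + (a : ℂ) • S
      = (((1 + a) / 2 : ℝ) : ℂ) • (1 + S) + (((1 - a) / 2 : ℝ) : ℂ) • (1 + -S) := by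
    push_cast
    module
  rw [hsplit]
  exact (hplus.smul (Complex.zero_le_real.mpr (by linarith [ha.1]))).add
    (hminus.smul (Complex.zero_le_real.mpr (by linarith [ha.2])))

end Involution

lemma isCPTP_unitary_mixture {U : Mat4} (hU : U ∈ unitary Mat4) {p : ℝ}
    (hp : p ∈ Set.Icc (0 : ℝ) 1) :
    IsCPTP fun X => (p : ℂ) • X + (1 - p : ℂ) • (U * X * Uᴴ) := by
  have hsqrt : ∀ r : ℝ, 0 ≤ r → star (Real.sqrt r : ℂ) * Real.sqrt r = r := fun r hr => by
    rw [Complex.star_def, Complex.conj_ofReal, ← Complex.ofReal_mul, Real.mul_self_sqrt hr]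
  have h0 := hsqrt p hp.1
  have h1 := hsqrt (1 - p) (by linarith [hp.2])
  push_cast at h1
  refine ⟨2, ![(Real.sqrt p : ℂ) • 1, (Real.sqrt (1 - p) : ℂ) • U], ?_, fun X => ?_⟩
  · simp only [Fin.sum_univ_two, cons_val_zero, cons_val_one, conjTranspose_smul,
      conjTranspose_one, smul_mul_smul, one_mul, h0, h1]
    rw [← star_eq_conjTranspose, Unitary.star_mul_self_of_mem hU, ← add_smul, add_sub_cancel,
      one_smul]
  · simp only [Fin.sum_univ_two, cons_val_zero, cons_val_one, conjTranspose_smul,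
      conjTranspose_one, mul_smul_comm, smul_mul_assoc, mul_one, smul_smul]
    rw [h0, h1, one_mul]

lemma σ1_conjTranspose : σ1ᴴ = σ1 := by
  ext i j; fin_cases i <;> fin_cases j <;> simp [σ1]

lemma σ3_conjTranspose : σ3ᴴ = σ3 := by
  ext i j; fin_cases i <;> fin_cases j <;> simp [σ3]

lemma σ3_mul_self : σ3 * σ3 = 1 := by
  ext i j; fin_cases i <;> fin_cases j <;> simp [σ3, mul_apply, Fin.sum_univ_two, one_apply]

lemma σ3_mul_σ1_mul_σ3 : σ3 * σ1 * σ3 = -σ1 := by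
  ext i j; fin_cases i <;> fin_cases j <;> simp [σ1, σ3, mul_apply, Fin.sum_univ_two]

lemma trace_σ1 : σ1.trace = 0 := by
  simp [σ1, trace_fin_two]

lemma σ1_kronecker_σ1_conjTranspose : (σ1 ⊗ₖ σ1)ᴴ = σ1 ⊗ₖ σ1 := by
  rw [conjTranspose_kronecker, σ1_conjTranspose]

lemma σ1_kronecker_σ1_mul_self : (σ1 ⊗ₖ σ1) * (σ1 ⊗ₖ σ1) = 1 := by
  rw [← mul_kronecker_mul, σ1_mul_self, one_kronecker_one]

lemma σ3_kronecker_one_mem_unitary : σ3 ⊗ₖ (1 : Mat2) ∈ unitary Mat4 := by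
  rw [← unitaryGroup, mem_unitaryGroup_iff, star_eq_conjTranspose, conjTranspose_kronecker,
    σ3_conjTranspose, conjTranspose_one, ← mul_kronecker_mul, σ3_mul_self, mul_one,
    one_kronecker_one]

lemma σ3_kronecker_one_conj_σ1_kronecker_σ1 :
    (σ3 ⊗ₖ (1 : Mat2)) * (σ1 ⊗ₖ σ1) * (σ3 ⊗ₖ (1 : Mat2))ᴴ = -(σ1 ⊗ₖ σ1) := by
  rw [conjTranspose_kronecker, σ3_conjTranspose, conjTranspose_one, ← mul_kronecker_mul,
    ← mul_kronecker_mul, σ3_mul_σ1_mul_σ3, one_mul, mul_one, ← neg_one_smul ℂ σ1, smul_kronecker,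
    neg_one_smul]

lemma BD_c1_axis_eq (a : ℝ) : BD a 0 0 = (1 / 4 : ℂ) • (1 + (a : ℂ) • (σ1 ⊗ₖ σ1)) := by
  simp only [BD, Complex.ofReal_zero, zero_smul, add_zero]

lemma isDensityMatrix_BD_c1_axis {a : ℝ} (ha : a ∈ Set.Icc (-1 : ℝ) 1) :
    IsDensityMatrix (BD a 0 0) := by
  rw [BD_c1_axis_eq]
  refine ⟨(posSemidef_one_add_smul_of_involutive σ1_kronecker_σ1_conjTranspose
    σ1_kronecker_σ1_mul_self ha).smul (by rw [Complex.nonneg_iff]; norm_num), ?_⟩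
  simp [trace_kronecker, trace_σ1]

lemma dephasing_BD_c1_axis (p a : ℝ) :
    (p : ℂ) • BD a 0 0 + (1 - p : ℂ) •
        ((σ3 ⊗ₖ (1 : Mat2)) * BD a 0 0 * (σ3 ⊗ₖ (1 : Mat2))ᴴ)
      = BD ((2 * p - 1) * a) 0 0 := by
  have hU := Unitary.mul_star_self_of_mem σ3_kronecker_one_mem_unitary
  rw [star_eq_conjTranspose] at hU
  simp only [BD_c1_axis_eq, mul_smul_comm, smul_mul_assoc, mul_add, add_mul, mul_one, hU,
    σ3_kronecker_one_conj_σ1_kronecker_σ1]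
  push_cast
  module

/-- the distance from ρ(c1,0,0) to the maximally mixed state contracts when
c1 is scaled by q ∈ [0,1]. -/
theorem distance_contracts_along_c1_axis
    (D : Mat4 → Mat4 → ℝ) (hD : Contractive D)
    (q c1 : ℝ) (hq : q ∈ Set.Icc (0 : ℝ) 1) (hc1 : c1 ∈ Set.Icc (-1 : ℝ) 1) :
    D (BD (q * c1) 0 0) (BD 0 0 0) ≤ D (BD c1 0 0) (BD 0 0 0) := by
  have hp : (1 + q) / 2 ∈ Set.Icc (0 : ℝ) 1 := ⟨by linarith [hq.1], by linarith [hq.2]⟩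
  have h := hD _ (isCPTP_unitary_mixture σ3_kronecker_one_mem_unitary hp) _ _
    (isDensityMatrix_BD_c1_axis hc1) (isDensityMatrix_BD_c1_axis (a := 0) (by norm_num))
  simp only [dephasing_BD_c1_axis] at h
  rwa [show 2 * ((1 + q) / 2) - 1 = q by ring, mul_zero] at h
end
end

section
/- (Universal freezing.) Let D be a contractive, transposition invariant, and jointly convex distance on two-qubit density matrices, and define the geometric discord Q_D(ρ) = inf over classical two-qubit states χ of D(ρ,χ). Let c1, c3 ∈ [-1,1], let γ > 0, and for t ≥ 0 let ρ(t) = ρ(c1·e^{-2γt}, -c1·c3·e^{-2γt}, c3), the state of two qubits initially in the BD state ρ(c1,-c1·c3,c3) evolving under local phase flip channels. Then for every t ≥ 0 with e^{-2γt}·|c1| ≥ |c3|, one has Q_D(ρ(t)) = D(ρ(0,0,c3), ρ(0,0,0)); in particular, Q_D(ρ(t)) is constant on the interval 0 ≤ t ≤ t* = -(1/(2γ))·ln(|c3|/|c1|) whenever |c1| > |c3|. -/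
open Matrix Kronecker
open scoped ComplexOrder

noncomputable section

/-! Write `A = c₁ e^{-2γt}`, so that the evolved state is `ρ(A, -A c₃, c₃)` with `|c₃| ≤ |A| ≤ 1`.
Each bound on its discord applies contractivity of `D` to an explicit channel.

Upper bound: `ρ(A, 0, 0)` is classical, and the channel "CNOT, replace qubit B by `(1 + A σ₁) / 2`,
CNOT" sends the pair `(ρ(0,0,c₃), ρ(0,0,0))` to `(ρ(A,-A c₃,c₃), ρ(A,0,0))`.

Lower bound: a classical state has the form `(1 + α σ_m ⊗ 1 + β 1 ⊗ σ_n + γ σ_m ⊗ σ_n) / 4`.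
Dephase qubit A along a unit vector `d ⊥ m` of the xz-plane, then qubit B along the direction `e`
of the correlation vector `(A d₁, 0, c₃ d₃)` that this leaves. The classical state becomes
`(1 + β' 1 ⊗ σ_e) / 4` and `ρ(A, -A c₃, c₃)` becomes `(1 + L σ_d ⊗ σ_e) / 4` with `L ≥ |c₃|`.
A `σ₂ ⊗ σ₂` flip removes the local term, a partial `σ₂` flip on A rescales `L` to `c₃`, and local
rotations turn `σ_d ⊗ σ_e` into `σ₃ ⊗ σ₃`: the images are `ρ(0,0,c₃)` and `ρ(0,0,0)`. -/

lemma Matrix.sub_kronecker {l m n o R : Type*} [Ring R] (A B : Matrix l m R) (C : Matrix n o R) :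
    (A - B) ⊗ₖ C = A ⊗ₖ C - B ⊗ₖ C := by
  ext ⟨i, j⟩ ⟨k, l⟩
  simp [sub_mul]

lemma Matrix.kronecker_sub {l m n o R : Type*} [Ring R] (A : Matrix l m R) (B C : Matrix n o R) :
    A ⊗ₖ (B - C) = A ⊗ₖ B - A ⊗ₖ C := by
  ext ⟨i, j⟩ ⟨k, l⟩
  simp [mul_sub]

lemma Matrix.kronecker_sum {l m n o ι R : Type*} [CommSemiring R] [Fintype n] [Fintype o]
    (s : Finset ι) (A : Matrix l m R) (B : ι → Matrix n o R) :
    A ⊗ₖ ∑ i ∈ s, B i = ∑ i ∈ s, A ⊗ₖ B i := by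
  ext ⟨i, j⟩ ⟨k, l⟩
  simp [Matrix.sum_apply, Finset.mul_sum]

namespace IsCPTP

variable {Λ Λ₁ Λ₂ : Mat4 → Mat4}

lemma map_add (h : IsCPTP Λ) (X Y : Mat4) : Λ (X + Y) = Λ X + Λ Y := by
  obtain ⟨n, K, -, hΛ⟩ := h
  simp only [hΛ, Matrix.mul_add, Matrix.add_mul, Finset.sum_add_distrib]

lemma map_smul (h : IsCPTP Λ) (c : ℂ) (X : Mat4) : Λ (c • X) = c • Λ X := by
  obtain ⟨n, K, -, hΛ⟩ := h
  simp only [hΛ, Matrix.mul_smul, Matrix.smul_mul, Finset.smul_sum]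

lemma isDensityMatrix_s12 (h : IsCPTP Λ) {ρ : Mat4} (hρ : IsDensityMatrix ρ) :
    IsDensityMatrix (Λ ρ) := by
  obtain ⟨n, K, hK, hΛ⟩ := h
  refine ⟨?_, ?_⟩
  · rw [hΛ]
    exact Matrix.posSemidef_sum _ fun i _ => hρ.1.mul_mul_conjTranspose_same (K i)
  · rw [hΛ, Matrix.trace_sum]
    simp_rw [Matrix.trace_mul_cycle (K _)]
    rw [← Matrix.trace_sum, ← Finset.sum_mul, hK, one_mul, hρ.2]

protected lemma id : IsCPTP (fun X => X) :=
  ⟨1, ![1], by simp, fun X => by simp⟩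

lemma conj {V : Mat4} (hV : Vᴴ * V = 1) : IsCPTP (fun X => V * X * Vᴴ) :=
  ⟨1, ![V], by simpa using hV, fun X => by simp⟩

lemma comp (h₁ : IsCPTP Λ₁) (h₂ : IsCPTP Λ₂) : IsCPTP (Λ₁ ∘ Λ₂) := by
  obtain ⟨n, K, hK, hΛ₁⟩ := h₁
  obtain ⟨m, L, hL, hΛ₂⟩ := h₂
  refine ⟨n * m, fun i => K (finProdFinEquiv.symm i).1 * L (finProdFinEquiv.symm i).2, ?_,
    fun X => ?_⟩
  · rw [← finProdFinEquiv.sum_comp, Fintype.sum_prod_type, Finset.sum_comm]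
    simp only [Equiv.symm_apply_apply, Matrix.conjTranspose_mul]
    calc ∑ j, ∑ i, (L j)ᴴ * (K i)ᴴ * (K i * L j)
        = ∑ j, (L j)ᴴ * (∑ i, (K i)ᴴ * K i) * L j := by
          simp only [Finset.mul_sum, Finset.sum_mul, Matrix.mul_assoc]
      _ = 1 := by simp [hK, hL]
  · rw [← finProdFinEquiv.sum_comp, Fintype.sum_prod_type, Function.comp_apply, hΛ₁, hΛ₂]
    simp only [Equiv.symm_apply_apply, Matrix.conjTranspose_mul, Finset.mul_sum,
      Finset.sum_mul, Matrix.mul_assoc]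

lemma convexComb (h₁ : IsCPTP Λ₁) (h₂ : IsCPTP Λ₂) {p : ℝ} (hp₀ : 0 ≤ p) (hp₁ : p ≤ 1) :
    IsCPTP (fun X => (p : ℂ) • Λ₁ X + (1 - (p : ℂ)) • Λ₂ X) := by
  obtain ⟨n, K, hK, hΛ₁⟩ := h₁
  obtain ⟨m, L, hL, hΛ₂⟩ := h₂
  set a : ℂ := ((√p : ℝ) : ℂ)
  set b : ℂ := ((√(1 - p) : ℝ) : ℂ)
  have hsa : star a = a := Complex.conj_ofReal _
  have hsb : star b = b := Complex.conj_ofReal _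
  have ha : a * a = p := by
    simp only [a, ← Complex.ofReal_mul, Real.mul_self_sqrt hp₀]
  have hb : b * b = 1 - p := by
    simp only [b, ← Complex.ofReal_mul, Real.mul_self_sqrt (sub_nonneg.2 hp₁), Complex.ofReal_sub,
      Complex.ofReal_one]
  let M : Fin n ⊕ Fin m → Mat4 := Sum.elim (fun i => a • K i) (fun j => b • L j)
  refine ⟨n + m, M ∘ finSumFinEquiv.symm, ?_, fun X => ?_⟩
  · rw [← finSumFinEquiv.sum_comp]
    simp only [Function.comp_apply, Equiv.symm_apply_apply, Fintype.sum_sum_type, M,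
      Sum.elim_inl, Sum.elim_inr, Matrix.conjTranspose_smul, Matrix.smul_mul,
      Matrix.mul_smul, smul_smul, ← Finset.smul_sum, hK, hL, hsa, hsb, ha, hb]
    rw [← add_smul, add_sub_cancel, one_smul]
  · dsimp only
    rw [← finSumFinEquiv.sum_comp, hΛ₁, hΛ₂]
    simp only [Function.comp_apply, Equiv.symm_apply_apply, Fintype.sum_sum_type, M,
      Sum.elim_inl, Sum.elim_inr, Matrix.conjTranspose_smul, Matrix.smul_mul,
      Matrix.mul_smul, smul_smul, ← Finset.smul_sum, hsa, hsb, ha, hb]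

end IsCPTP

def pauliVec (v : Fin 3 → ℝ) : Mat2 := ∑ i, (v i : ℂ) • pauli i

lemma pauliVec_eq (v : Fin 3 → ℝ) :
    pauliVec v = !![(v 2 : ℂ), v 0 - v 1 * Complex.I; v 0 + v 1 * Complex.I, -(v 2 : ℂ)] := by
  ext i j
  fin_cases i <;> fin_cases j <;>
    simp [pauliVec, pauli, σ1, σ2, σ3, Fin.sum_univ_three]; ring

lemma pauliVec_one_zero_zero : pauliVec ![1, 0, 0] = σ1 := by
  simp [pauliVec, pauli, Fin.sum_univ_three]

lemma pauliVec_zero_one_zero : pauliVec ![0, 1, 0] = σ2 := by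
  simp [pauliVec, pauli, Fin.sum_univ_three]

lemma pauliVec_zero_zero_one : pauliVec ![0, 0, 1] = σ3 := by
  simp [pauliVec, pauli, Fin.sum_univ_three]

lemma conjTranspose_pauliVec (v : Fin 3 → ℝ) : (pauliVec v)ᴴ = pauliVec v := by
  rw [pauliVec_eq]
  ext i j
  fin_cases i <;> fin_cases j <;> simp [Complex.ext_iff]

lemma pauliVec_mul_self (d : Fin 3 → ℝ) :
    pauliVec d * pauliVec d = ((d ⬝ᵥ d : ℝ) : ℂ) • 1 := by
  rw [pauliVec_eq]
  ext i j
  fin_cases i <;> fin_cases j <;>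
    simp [Matrix.mul_apply, dotProduct, Fin.sum_univ_three, Complex.ext_iff] <;>
    (try constructor) <;> ring

lemma pauliVec_mul_self_eq_one {d : Fin 3 → ℝ} (hd : d ⬝ᵥ d = 1) :
    pauliVec d * pauliVec d = 1 := by
  rw [pauliVec_mul_self, hd, Complex.ofReal_one, one_smul]

lemma pauliVec_mul_pauliVec_mul (d x : Fin 3 → ℝ) :
    pauliVec d * pauliVec x * pauliVec d
      = ((2 * (d ⬝ᵥ x) : ℝ) : ℂ) • pauliVec d - ((d ⬝ᵥ d : ℝ) : ℂ) • pauliVec x := by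
  simp only [pauliVec_eq]
  ext i j
  fin_cases i <;> fin_cases j <;>
    simp [Matrix.mul_apply, dotProduct, Fin.sum_univ_three, Complex.ext_iff] <;>
    (try constructor) <;> ring

lemma conjTranspose_σ2 : σ2ᴴ = σ2 := by
  rw [← pauliVec_zero_one_zero, conjTranspose_pauliVec]

lemma σ2_mul_self : σ2 * σ2 = 1 := by
  rw [← pauliVec_zero_one_zero, pauliVec_mul_self_eq_one (by simp [dotProduct, Fin.sum_univ_three])]

lemma σ2_mul_pauliVec_mul {x : Fin 3 → ℝ} (hx : x 1 = 0) :
    σ2 * pauliVec x * σ2 = (-1 : ℂ) • pauliVec x := by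
  rw [← pauliVec_zero_one_zero, pauliVec_mul_pauliVec_mul]
  simp [dotProduct, Fin.sum_univ_three, hx]

lemma BD_eq_pauliVec (c1 c2 c3 : ℝ) :
    BD c1 c2 c3 = (1 / 4 : ℂ) • (1 + (c1 : ℂ) • (pauliVec ![1, 0, 0] ⊗ₖ pauliVec ![1, 0, 0])
      + (c2 : ℂ) • (pauliVec ![0, 1, 0] ⊗ₖ pauliVec ![0, 1, 0])
      + (c3 : ℂ) • (pauliVec ![0, 0, 1] ⊗ₖ pauliVec ![0, 0, 1])) := by
  rw [BD, pauliVec_one_zero_zero, pauliVec_zero_one_zero, pauliVec_zero_zero_one]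

def pauliFlip (p : ℝ) (P Q : Mat2) (X : Mat4) : Mat4 :=
  (p : ℂ) • X + (1 - (p : ℂ)) • ((P ⊗ₖ Q) * X * (P ⊗ₖ Q))

section pauliFlip

variable {p : ℝ} {P Q : Mat2}

lemma isCPTP_pauliFlip (hp₀ : 0 ≤ p) (hp₁ : p ≤ 1) (hP : Pᴴ = P) (hQ : Qᴴ = Q)
    (hPP : P * P = 1) (hQQ : Q * Q = 1) : IsCPTP (pauliFlip p P Q) := by
  have hPQ : (P ⊗ₖ Q)ᴴ = P ⊗ₖ Q := by rw [Matrix.conjTranspose_kronecker, hP, hQ]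
  have hU : (P ⊗ₖ Q)ᴴ * (P ⊗ₖ Q) = 1 := by
    rw [hPQ, ← Matrix.mul_kronecker_mul, hPP, hQQ, Matrix.one_kronecker_one]
  have h := IsCPTP.id.convexComb (IsCPTP.conj hU) hp₀ hp₁
  rw [hPQ] at h
  exact h

lemma pauliFlip_add (X Y : Mat4) :
    pauliFlip p P Q (X + Y) = pauliFlip p P Q X + pauliFlip p P Q Y := by
  simp only [pauliFlip, Matrix.mul_add, Matrix.add_mul]
  module

lemma pauliFlip_smul (c : ℂ) (X : Mat4) : pauliFlip p P Q (c • X) = c • pauliFlip p P Q X := by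
  simp only [pauliFlip, Matrix.mul_smul, Matrix.smul_mul]
  module

lemma pauliFlip_zero : pauliFlip p P Q 0 = 0 := by
  simp [pauliFlip]

lemma pauliFlip_kronecker (X Y : Mat2) :
    pauliFlip p P Q (X ⊗ₖ Y)
      = (p : ℂ) • (X ⊗ₖ Y) + (1 - (p : ℂ)) • ((P * X * P) ⊗ₖ (Q * Y * Q)) := by
  rw [pauliFlip, ← Matrix.mul_kronecker_mul, ← Matrix.mul_kronecker_mul]

lemma pauliFlip_kronecker_of_conj {X Y : Mat2} {α β : ℂ} (hX : P * X * P = α • X)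
    (hY : Q * Y * Q = β • Y) :
    pauliFlip p P Q (X ⊗ₖ Y) = ((p : ℂ) + (1 - p) * (α * β)) • (X ⊗ₖ Y) := by
  rw [pauliFlip_kronecker, hX, hY, Matrix.smul_kronecker, Matrix.kronecker_smul, smul_smul]
  module

lemma pauliFlip_one_kronecker (hPP : P * P = 1) (Y : Mat2) :
    pauliFlip p P 1 (1 ⊗ₖ Y) = 1 ⊗ₖ Y := by
  rw [pauliFlip_kronecker_of_conj (α := 1) (β := 1) (by rw [mul_one, hPP, one_smul])
    (by rw [one_mul, mul_one, one_smul])]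
  simp

lemma pauliFlip_one (hPP : P * P = 1) (hQQ : Q * Q = 1) : pauliFlip p P Q 1 = 1 := by
  rw [← Matrix.one_kronecker_one, pauliFlip_kronecker_of_conj (α := 1) (β := 1)
    (by rw [mul_one, hPP, one_smul]) (by rw [mul_one, hQQ, one_smul])]
  simp

end pauliFlip

section dephasing

variable {d e : Fin 3 → ℝ}

lemma pauliFlip_half_pauliVec_left (hd : d ⬝ᵥ d = 1) (x : Fin 3 → ℝ) (Y : Mat2) :
    pauliFlip 2⁻¹ (pauliVec d) 1 (pauliVec x ⊗ₖ Y) = ((d ⬝ᵥ x : ℝ) : ℂ) • (pauliVec d ⊗ₖ Y) := by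
  rw [pauliFlip_kronecker, pauliVec_mul_pauliVec_mul, hd, Matrix.sub_kronecker,
    Matrix.smul_kronecker, Matrix.smul_kronecker, mul_one, one_mul]
  push_cast
  module

lemma pauliFlip_half_pauliVec_right (he : e ⬝ᵥ e = 1) (x : Fin 3 → ℝ) (X : Mat2) :
    pauliFlip 2⁻¹ 1 (pauliVec e) (X ⊗ₖ pauliVec x) = ((e ⬝ᵥ x : ℝ) : ℂ) • (X ⊗ₖ pauliVec e) := by
  rw [pauliFlip_kronecker, pauliVec_mul_pauliVec_mul, he, Matrix.kronecker_sub,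
    Matrix.kronecker_smul, Matrix.kronecker_smul, mul_one, one_mul]
  push_cast
  module

lemma pauliFlip_half_pauliFlip_half_BD (hd : d ⬝ᵥ d = 1) (he : e ⬝ᵥ e = 1) (c1 c2 c3 : ℝ) :
    pauliFlip 2⁻¹ 1 (pauliVec e) (pauliFlip 2⁻¹ (pauliVec d) 1 (BD c1 c2 c3))
      = (1 / 4 : ℂ) • (1 + ((c1 * d 0 * e 0 + c2 * d 1 * e 1 + c3 * d 2 * e 2 : ℝ) : ℂ) •
          (pauliVec d ⊗ₖ pauliVec e)) := by
  simp only [BD_eq_pauliVec, pauliFlip_add, pauliFlip_smul,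
    pauliFlip_one (pauliVec_mul_self_eq_one hd) (one_mul 1),
    pauliFlip_one (one_mul 1) (pauliVec_mul_self_eq_one he), pauliFlip_half_pauliVec_left hd,
    pauliFlip_half_pauliVec_right he]
  simp only [one_div, dotProduct, Fin.sum_univ_three, Fin.isValue, Matrix.cons_val_zero, mul_one,
    Matrix.cons_val_one, mul_zero, add_zero, Matrix.cons_val, Complex.coe_smul, zero_add, smul_add,
    Complex.ofReal_add, Complex.ofReal_mul]
  module

end dephasing

def dephasingChannel (d e : Fin 3 → ℝ) (κ : ℝ) : Mat4 → Mat4 :=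
  pauliFlip ((1 + κ) / 2) σ2 1 ∘ pauliFlip 2⁻¹ σ2 σ2 ∘ pauliFlip 2⁻¹ 1 (pauliVec e) ∘
    pauliFlip 2⁻¹ (pauliVec d) 1

section dephasingChannel

variable {d e : Fin 3 → ℝ} {κ : ℝ}

lemma isCPTP_dephasingChannel (hd : d ⬝ᵥ d = 1) (he : e ⬝ᵥ e = 1) (hκ : |κ| ≤ 1) :
    IsCPTP (dephasingChannel d e κ) := by
  obtain ⟨hκ₀, hκ₁⟩ := abs_le.1 hκ
  have hA := isCPTP_pauliFlip (p := 2⁻¹) (by norm_num) (by norm_num) (conjTranspose_pauliVec d)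
    conjTranspose_one (pauliVec_mul_self_eq_one hd) (one_mul 1)
  have hB := isCPTP_pauliFlip (p := 2⁻¹) (by norm_num) (by norm_num) conjTranspose_one
    (conjTranspose_pauliVec e) (one_mul 1) (pauliVec_mul_self_eq_one he)
  have hYY := isCPTP_pauliFlip (p := 2⁻¹) (by norm_num) (by norm_num) conjTranspose_σ2
    conjTranspose_σ2 σ2_mul_self σ2_mul_self
  have hY1 := isCPTP_pauliFlip (p := (1 + κ) / 2) (by linarith) (by linarith) conjTranspose_σ2
    conjTranspose_one σ2_mul_self (one_mul 1)
  exact hY1.comp (hYY.comp (hB.comp hA))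

lemma dephasingChannel_BD (hd : d ⬝ᵥ d = 1) (he : e ⬝ᵥ e = 1) (hd1 : d 1 = 0) (he1 : e 1 = 0)
    (c1 c2 c3 : ℝ) :
    dephasingChannel d e κ (BD c1 c2 c3) = (1 / 4 : ℂ) •
      (1 + ((κ * (c1 * d 0 * e 0 + c3 * d 2 * e 2) : ℝ) : ℂ) • (pauliVec d ⊗ₖ pauliVec e)) := by
  have hYY : pauliFlip 2⁻¹ σ2 σ2 (pauliVec d ⊗ₖ pauliVec e) = pauliVec d ⊗ₖ pauliVec e := by
    rw [pauliFlip_kronecker_of_conj (σ2_mul_pauliVec_mul hd1) (σ2_mul_pauliVec_mul he1)]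
    norm_num
  have hY1 : pauliFlip ((1 + κ) / 2) σ2 1 (pauliVec d ⊗ₖ pauliVec e)
      = (κ : ℂ) • (pauliVec d ⊗ₖ pauliVec e) := by
    rw [pauliFlip_kronecker_of_conj (β := 1) (σ2_mul_pauliVec_mul hd1) (by simp)]
    push_cast
    congr 1
    ring
  simp only [dephasingChannel, Function.comp_apply, pauliFlip_half_pauliFlip_half_BD hd he, hd1,
    pauliFlip_add, pauliFlip_smul, pauliFlip_one σ2_mul_self σ2_mul_self,
    pauliFlip_one σ2_mul_self (one_mul 1), hYY, hY1, smul_smul]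
  push_cast
  module

lemma dephasingChannel_bloch (hd : d ⬝ᵥ d = 1) (he : e ⬝ᵥ e = 1) (he1 : e 1 = 0)
    {m : Fin 3 → ℝ} (hdm : d ⬝ᵥ m = 0) (n : Fin 3 → ℝ) (α β γ : ℂ) :
    dephasingChannel d e κ ((1 / 4 : ℂ) • (1 + α • (pauliVec m ⊗ₖ 1) + β • (1 ⊗ₖ pauliVec n)
      + γ • (pauliVec m ⊗ₖ pauliVec n))) = (1 / 4 : ℂ) • 1 := by
  have hdd := pauliVec_mul_self_eq_one hd
  have hee := pauliVec_mul_self_eq_one he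
  have hYY : pauliFlip 2⁻¹ σ2 σ2 (1 ⊗ₖ pauliVec e) = 0 := by
    rw [pauliFlip_kronecker_of_conj (α := 1) (by simp [σ2_mul_self]) (σ2_mul_pauliVec_mul he1)]
    norm_num
  simp only [dephasingChannel, Function.comp_apply, pauliFlip_add, pauliFlip_smul,
    pauliFlip_one hdd (one_mul 1), pauliFlip_one (one_mul 1) hee,
    pauliFlip_one σ2_mul_self σ2_mul_self, pauliFlip_one σ2_mul_self (one_mul 1),
    pauliFlip_half_pauliVec_left hd, hdm, pauliFlip_one_kronecker hdd,
    pauliFlip_half_pauliVec_right he, hYY, pauliFlip_zero]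
  simp

end dephasingChannel

def rotY (c s : ℝ) : Mat2 := !![(c : ℂ), -s; s, c]

section rotY

variable {c s : ℝ}

lemma rotY_mem_unitary (h : c ^ 2 + s ^ 2 = 1) : rotY c s ∈ unitary Mat2 := by
  rw [Unitary.mem_iff, Matrix.star_eq_conjTranspose]
  constructor <;>
  · ext i j
    fin_cases i <;> fin_cases j <;>
      simp [rotY, Matrix.mul_apply, Complex.ext_iff] <;> nlinarith

lemma rotY_mul_pauliVec_mul {d : Fin 3 → ℝ} (hd : d 0 ^ 2 + d 2 ^ 2 = 1) (hd1 : d 1 = 0)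
    (hcos : c ^ 2 - s ^ 2 = d 2) (hsin : 2 * c * s = -d 0) :
    rotY c s * pauliVec d * star (rotY c s) = σ3 := by
  rw [pauliVec_eq, Matrix.star_eq_conjTranspose]
  ext i j
  fin_cases i <;> fin_cases j <;>
    simp [rotY, σ3, hd1, Matrix.mul_apply, Complex.ext_iff]
  · linear_combination d 2 * hcos - d 0 * hsin + hd
  · linear_combination d 0 * hcos + d 2 * hsin
  · linear_combination d 0 * hcos + d 2 * hsin
  · linear_combination -(d 2 * hcos) + d 0 * hsin - hd

end rotY

lemma exists_half_angle {x z : ℝ} (h : x ^ 2 + z ^ 2 = 1) :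
    ∃ c s : ℝ, c ^ 2 + s ^ 2 = 1 ∧ c ^ 2 - s ^ 2 = z ∧ 2 * c * s = x := by
  set w : ℂ := ⟨z, x⟩
  have hw : ‖w‖ = 1 := by
    rw [Complex.norm_def, Complex.normSq_mk, Real.sqrt_eq_one]
    linarith
  have hw0 : w ≠ 0 := norm_ne_zero_iff.1 (by rw [hw]; exact one_ne_zero)
  have hθ : Complex.arg w = 2 * (Complex.arg w / 2) := by ring
  refine ⟨Real.cos (Complex.arg w / 2), Real.sin (Complex.arg w / 2),
    by rw [add_comm, Real.sin_sq_add_cos_sq], ?_, ?_⟩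
  · rw [← Real.cos_two_mul', ← hθ, Complex.cos_arg hw0, hw, div_one]
  · rw [mul_right_comm, ← Real.sin_two_mul, ← hθ, Complex.sin_arg, hw, div_one]

lemma exists_unitary_conj_pauliVec {d : Fin 3 → ℝ} (hd : d ⬝ᵥ d = 1) (hd1 : d 1 = 0) :
    ∃ R ∈ unitary Mat2, R * pauliVec d * star R = σ3 := by
  have hd' : d 0 ^ 2 + d 2 ^ 2 = 1 := by
    simpa [dotProduct, Fin.sum_univ_three, hd1, sq] using hd
  obtain ⟨c, s, hcs, hcos, hsin⟩ :=
    exists_half_angle (x := -d 0) (z := d 2) (by rw [neg_sq]; exact hd')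
  exact ⟨rotY c s, rotY_mem_unitary hcs, rotY_mul_pauliVec_mul hd' hd1 hcos hsin⟩

lemma kronecker_conj_eq_BD {R S P Q : Mat2} (hR : R ∈ unitary Mat2) (hS : S ∈ unitary Mat2)
    (hRP : R * P * star R = σ3) (hSQ : S * Q * star S = σ3) (v : ℝ) :
    (R ⊗ₖ S) * ((1 / 4 : ℂ) • (1 + (v : ℂ) • (P ⊗ₖ Q))) * (R ⊗ₖ S)ᴴ = BD 0 0 v := by
  rw [Matrix.conjTranspose_kronecker, ← Matrix.star_eq_conjTranspose,
    ← Matrix.star_eq_conjTranspose]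
  simp only [Matrix.mul_smul, Matrix.smul_mul, Matrix.mul_add, Matrix.add_mul, mul_one,
    ← Matrix.mul_kronecker_mul, hRP, hSQ, Unitary.mul_star_self_of_mem hR,
    Unitary.mul_star_self_of_mem hS, Matrix.one_kronecker_one]
  simp [BD]

def cnot : Mat4 := 1 ⊗ₖ !![1, 0; 0, 0] + σ1 ⊗ₖ !![0, 0; 0, 1]

lemma conjTranspose_cnot : cnotᴴ = cnot := by
  ext ⟨i₁, i₂⟩ ⟨j₁, j₂⟩
  fin_cases i₁ <;> fin_cases i₂ <;> fin_cases j₁ <;> fin_cases j₂ <;> simp [cnot, σ1]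

lemma cnot_mul_self : cnot * cnot = 1 := by
  ext ⟨i₁, i₂⟩ ⟨j₁, j₂⟩
  fin_cases i₁ <;> fin_cases i₂ <;> fin_cases j₁ <;> fin_cases j₂ <;>
    simp [cnot, σ1, Matrix.mul_apply, Fintype.sum_prod_type, Matrix.one_apply]

lemma cnot_conj_σ3_σ3 : cnot * (σ3 ⊗ₖ σ3) * cnot = σ3 ⊗ₖ 1 := by
  ext ⟨i₁, i₂⟩ ⟨j₁, j₂⟩
  fin_cases i₁ <;> fin_cases i₂ <;> fin_cases j₁ <;> fin_cases j₂ <;>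
    simp [cnot, σ1, σ3, Matrix.mul_apply, Fintype.sum_prod_type, Matrix.one_apply]

lemma cnot_conj_σ3_one : cnot * (σ3 ⊗ₖ 1) * cnot = σ3 ⊗ₖ σ3 := by
  rw [← cnot_conj_σ3_σ3, ← mul_assoc, ← mul_assoc, cnot_mul_self, one_mul, mul_assoc,
    cnot_mul_self, mul_one]

lemma cnot_conj_one_σ1 : cnot * (1 ⊗ₖ σ1) * cnot = σ1 ⊗ₖ σ1 := by
  ext ⟨i₁, i₂⟩ ⟨j₁, j₂⟩
  fin_cases i₁ <;> fin_cases i₂ <;> fin_cases j₁ <;> fin_cases j₂ <;>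
    simp [cnot, σ1, Matrix.mul_apply, Fintype.sum_prod_type, Matrix.one_apply]

lemma cnot_conj_σ3_σ1 : cnot * (σ3 ⊗ₖ σ1) * cnot = -(σ2 ⊗ₖ σ2) := by
  ext ⟨i₁, i₂⟩ ⟨j₁, j₂⟩
  fin_cases i₁ <;> fin_cases i₂ <;> fin_cases j₁ <;> fin_cases j₂ <;>
    simp [cnot, σ1, σ2, σ3, Matrix.mul_apply, Fintype.sum_prod_type, Matrix.one_apply]

def idKronKraus {n : ℕ} (k : Fin n → Mat2) (X : Mat4) : Mat4 :=
  ∑ i, (1 ⊗ₖ k i) * X * (1 ⊗ₖ k i)ᴴ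

section idKronKraus

variable {n : ℕ} {k : Fin n → Mat2}

lemma isCPTP_idKronKraus (hk : ∑ i, (k i)ᴴ * k i = 1) : IsCPTP (idKronKraus k) := by
  refine ⟨n, fun i => 1 ⊗ₖ k i, ?_, fun X => rfl⟩
  simp only [Matrix.conjTranspose_kronecker, Matrix.conjTranspose_one, ← Matrix.mul_kronecker_mul,
    one_mul, ← Matrix.kronecker_sum, hk, Matrix.one_kronecker_one]

lemma idKronKraus_kronecker (u Y : Mat2) :
    idKronKraus k (u ⊗ₖ Y) = u ⊗ₖ ∑ i, k i * Y * (k i)ᴴ := by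
  simp only [idKronKraus, Matrix.conjTranspose_kronecker, Matrix.conjTranspose_one,
    ← Matrix.mul_kronecker_mul, one_mul, mul_one, Matrix.kronecker_sum]

end idKronKraus

-- For `a ^ 2 = (1 + A) / 4` and `b ^ 2 = (1 - A) / 4` these are Kraus operators of the qubit
-- channel `Y ↦ tr Y • (1 + A σ₁) / 2`, read off from the eigendecomposition
-- `(1 + A σ₁) / 2 = (1 + A) / 2 • |+⟩⟨+| + (1 - A) / 2 • |-⟩⟨-|`.
def prepareKraus (a b : ℝ) : Fin 4 → Mat2 :=
  ![(a : ℂ) • !![1, 0; 1, 0], (a : ℂ) • !![0, 1; 0, 1],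
    (b : ℂ) • !![1, 0; -1, 0], (b : ℂ) • !![0, 1; 0, -1]]

section prepareKraus

variable {a b A : ℝ}

lemma sum_conjTranspose_prepareKraus_mul (ha : a ^ 2 = (1 + A) / 4) (hb : b ^ 2 = (1 - A) / 4) :
    ∑ i, (prepareKraus a b i)ᴴ * prepareKraus a b i = 1 := by
  have ha' : (a : ℂ) ^ 2 = (1 + A) / 4 := by exact_mod_cast ha
  have hb' : (b : ℂ) ^ 2 = (1 - A) / 4 := by exact_mod_cast hb
  ext i j
  fin_cases i <;> fin_cases j <;>
    simp [prepareKraus, Fin.sum_univ_four, Matrix.mul_apply] <;>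
    linear_combination 2 * ha' + 2 * hb'

lemma sum_prepareKraus_mul_one_mul (ha : a ^ 2 = (1 + A) / 4) (hb : b ^ 2 = (1 - A) / 4) :
    ∑ i, prepareKraus a b i * 1 * (prepareKraus a b i)ᴴ = 1 + (A : ℂ) • σ1 := by
  have ha' : (a : ℂ) ^ 2 = (1 + A) / 4 := by exact_mod_cast ha
  have hb' : (b : ℂ) ^ 2 = (1 - A) / 4 := by exact_mod_cast hb
  ext i j
  fin_cases i <;> fin_cases j <;>
    simp [prepareKraus, σ1, Fin.sum_univ_four, Matrix.vecMul, dotProduct, Fin.sum_univ_two, ← sq,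
      ha', hb'] <;> ring

end prepareKraus

def cnotPrepareChannel (A : ℝ) : Mat4 → Mat4 :=
  (fun X => cnot * X * cnot) ∘ idKronKraus (prepareKraus √((1 + A) / 4) √((1 - A) / 4)) ∘
    (fun X => cnot * X * cnot)

section cnotPrepareChannel

variable {A : ℝ}

lemma sq_sqrt_one_add_div_four (hA : |A| ≤ 1) :
    √((1 + A) / 4) ^ 2 = (1 + A) / 4 ∧ √((1 - A) / 4) ^ 2 = (1 - A) / 4 := by
  obtain ⟨hA₀, hA₁⟩ := abs_le.1 hA
  exact ⟨Real.sq_sqrt (by linarith), Real.sq_sqrt (by linarith)⟩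

lemma isCPTP_cnotPrepareChannel (hA : |A| ≤ 1) : IsCPTP (cnotPrepareChannel A) := by
  obtain ⟨ha, hb⟩ := sq_sqrt_one_add_div_four hA
  have hcnot : IsCPTP (fun X => cnot * X * cnot) := by
    simpa only [conjTranspose_cnot] using
      IsCPTP.conj (V := cnot) (by rw [conjTranspose_cnot, cnot_mul_self])
  exact hcnot.comp ((isCPTP_idKronKraus (sum_conjTranspose_prepareKraus_mul ha hb)).comp hcnot)

lemma cnotPrepareChannel_BD (hA : |A| ≤ 1) (c : ℝ) :
    cnotPrepareChannel A (BD 0 0 c) = BD A (-(A * c)) c := by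
  obtain ⟨ha, hb⟩ := sq_sqrt_one_add_div_four hA
  have hR := isCPTP_idKronKraus (sum_conjTranspose_prepareKraus_mul ha hb)
  have h₁ : cnot * BD 0 0 c * cnot = (1 / 4 : ℂ) • (1 ⊗ₖ 1 + (c : ℂ) • (σ3 ⊗ₖ 1)) := by
    simp only [BD, Complex.ofReal_zero, zero_smul, add_zero, Matrix.mul_smul, Matrix.smul_mul,
      Matrix.mul_add, Matrix.add_mul, mul_one, cnot_mul_self, cnot_conj_σ3_σ3,
      Matrix.one_kronecker_one]
  rw [cnotPrepareChannel, Function.comp_apply, Function.comp_apply, h₁, hR.map_smul, hR.map_add,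
    hR.map_smul, idKronKraus_kronecker, idKronKraus_kronecker, sum_prepareKraus_mul_one_mul ha hb]
  simp only [Matrix.kronecker_add, Matrix.kronecker_smul, Matrix.one_kronecker_one,
    Matrix.mul_smul, Matrix.smul_mul, Matrix.mul_add, Matrix.add_mul, mul_one, cnot_mul_self,
    cnot_conj_one_σ1, cnot_conj_σ3_one, cnot_conj_σ3_σ1, BD]
  push_cast
  module

end cnotPrepareChannel

lemma isDensityMatrix_BD_axis3 {c : ℝ} (hc : |c| ≤ 1) : IsDensityMatrix (BD 0 0 c) := by
  obtain ⟨hc₀, hc₁⟩ := abs_le.1 hc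
  have hdiag : BD 0 0 c
      = Matrix.diagonal fun p => (((1 + if p.1 = p.2 then c else -c) / 4 : ℝ) : ℂ) := by
    ext ⟨i₁, i₂⟩ ⟨j₁, j₂⟩
    fin_cases i₁ <;> fin_cases i₂ <;> fin_cases j₁ <;> fin_cases j₂ <;> simp [BD, σ3] <;> ring
  rw [hdiag]
  refine ⟨Matrix.posSemidef_diagonal_iff.2 fun p => ?_, ?_⟩
  · have : 0 ≤ (1 + if p.1 = p.2 then c else -c) / 4 := by split_ifs <;> linarith
    exact_mod_cast this
  · simp only [Complex.ofReal_div, Complex.ofReal_add, Complex.ofReal_one, Complex.ofReal_ofNat,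
      Matrix.trace_diagonal, Fintype.sum_prod_type, Fin.sum_univ_two, Fin.isValue, ↓reduceIte,
      zero_ne_one, Complex.ofReal_neg, one_ne_zero]
    ring

lemma isDensityMatrix_BD_neg_mul {A c : ℝ} (hA : |A| ≤ 1) (hc : |c| ≤ 1) :
    IsDensityMatrix (BD A (-(A * c)) c) := by
  rw [← cnotPrepareChannel_BD hA]
  exact (isCPTP_cnotPrepareChannel hA).isDensityMatrix_s12 (isDensityMatrix_BD_axis3 hc)

lemma sum_vecMulVec_eq_one {ι : Type*} [Fintype ι] [DecidableEq ι] {a : ι → ι → ℂ}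
    (ha : ∀ i i', ∑ k, starRingEnd ℂ (a i k) * a i' k = if i = i' then 1 else 0) :
    ∑ i, Matrix.vecMulVec (a i) (star (a i)) = 1 := by
  set V : Matrix ι ι ℂ := Matrix.of fun k i => a i k
  have hV : Vᴴ * V = 1 := by
    ext i i'
    simp [V, Matrix.mul_apply, ha, Matrix.one_apply]
  have hV' : V * Vᴴ = 1 := mul_eq_one_comm.1 hV
  ext k l
  simpa [V, Matrix.mul_apply, Matrix.sum_apply, Matrix.vecMulVec_apply] using congr_fun₂ hV' k l

lemma exists_pauliVec_of_isHermitian {H : Mat2} (hH : H.IsHermitian) (htr : H.trace = 1) :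
    ∃ m : Fin 3 → ℝ, H = (1 / 2 : ℂ) • (1 + pauliVec m) := by
  have h01 := hH.apply 0 1
  have h00 := hH.apply 0 0
  have h11 := hH.apply 1 1
  rw [Matrix.trace_fin_two] at htr
  refine ⟨![2 * (H 1 0).re, 2 * (H 1 0).im, (H 0 0).re - (H 1 1).re], ?_⟩
  simp only [Complex.ext_iff, Complex.star_def, Complex.conj_re, Complex.conj_im,
    Complex.add_re, Complex.add_im, Complex.one_re, Complex.one_im] at h01 h00 h11 htr
  ext i j
  fin_cases i <;> fin_cases j <;> simp [pauliVec_eq, Complex.ext_iff] <;> constructor <;> linarith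

lemma exists_vecMulVec_eq_pauliVec {a : Fin 2 → Fin 2 → ℂ}
    (ha : ∀ i i', ∑ k, starRingEnd ℂ (a i k) * a i' k = if i = i' then 1 else 0) :
    ∃ m : Fin 3 → ℝ, Matrix.vecMulVec (a 0) (star (a 0)) = (1 / 2 : ℂ) • (1 + pauliVec m) ∧
      Matrix.vecMulVec (a 1) (star (a 1)) = (1 / 2 : ℂ) • (1 - pauliVec m) := by
  have htr : (Matrix.vecMulVec (a 0) (star (a 0))).trace = 1 := by
    simpa [dotProduct, mul_comm] using ha 0 0
  obtain ⟨m, hm⟩ := exists_pauliVec_of_isHermitian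
    (Matrix.posSemidef_vecMulVec_self_star (a 0)).isHermitian htr
  have hsum := sum_vecMulVec_eq_one ha
  rw [Fin.sum_univ_two, hm] at hsum
  refine ⟨m, hm, ?_⟩
  rw [eq_sub_of_add_eq' hsum]
  module

lemma IsClassical.exists_pauliVec {χ : Mat4} (hχ : IsClassical χ) :
    ∃ (m n : Fin 3 → ℝ) (α β γ : ℂ), χ = (1 / 4 : ℂ) • (1 + α • (pauliVec m ⊗ₖ 1)
      + β • (1 ⊗ₖ pauliVec n) + γ • (pauliVec m ⊗ₖ pauliVec n)) := by
  obtain ⟨p, a, b, -, hp, ha, hb, rfl⟩ := hχ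
  obtain ⟨m, ha0, ha1⟩ := exists_vecMulVec_eq_pauliVec ha
  obtain ⟨n, hb0, hb1⟩ := exists_vecMulVec_eq_pauliVec hb
  have hp' : (p 0 0 + p 0 1 + p 1 0 + p 1 1 : ℂ) = 1 := by
    simp only [Fin.sum_univ_two] at hp
    exact_mod_cast (by linarith : p 0 0 + p 0 1 + p 1 0 + p 1 1 = 1)
  refine ⟨m, n, p 0 0 + p 0 1 - p 1 0 - p 1 1, p 0 0 - p 0 1 + p 1 0 - p 1 1,
    p 0 0 - p 0 1 - p 1 0 + p 1 1, ?_⟩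
  simp only [Fin.sum_univ_two, ha0, ha1, hb0, hb1, Matrix.smul_kronecker, Matrix.kronecker_smul,
    Matrix.add_kronecker, Matrix.kronecker_add, Matrix.sub_kronecker, Matrix.kronecker_sub,
    Matrix.one_kronecker_one]
  linear_combination (norm := module) (1 / 4 : ℂ) • hp' • (1 : Mat4)

lemma IsClassical.isDensityMatrix_s12 {χ : Mat4} (hχ : IsClassical χ) : IsDensityMatrix χ := by
  obtain ⟨p, a, b, hp₀, hp, ha, hb, rfl⟩ := hχ
  refine ⟨Matrix.posSemidef_sum _ fun i _ => Matrix.posSemidef_sum _ fun j _ =>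
    ((Matrix.posSemidef_vecMulVec_self_star _).kronecker
      (Matrix.posSemidef_vecMulVec_self_star _)).smul (by exact_mod_cast hp₀ i j), ?_⟩
  have hna : ∀ i, a i ⬝ᵥ star (a i) = 1 := fun i => by simpa [dotProduct, mul_comm] using ha i i
  have hnb : ∀ j, b j ⬝ᵥ star (b j) = 1 := fun j => by simpa [dotProduct, mul_comm] using hb j j
  simp only [Matrix.trace_sum, Matrix.trace_smul, Matrix.trace_kronecker, Matrix.trace_vecMulVec,
    hna, hnb, mul_one, smul_eq_mul]
  exact_mod_cast hp

lemma isClassical_BD_axis1 {A : ℝ} (hA : |A| ≤ 1) : IsClassical (BD A 0 0) := by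
  obtain ⟨hA₀, hA₁⟩ := abs_le.1 hA
  set r : ℂ := (((√2)⁻¹ : ℝ) : ℂ)
  have hr : r * r = 1 / 2 := by
    rw [← Complex.ofReal_mul, ← mul_inv, Real.mul_self_sqrt zero_le_two]
    norm_num
  have hrs : starRingEnd ℂ r = r := Complex.conj_ofReal _
  set v : Fin 2 → Fin 2 → ℂ := ![![r, r], ![r, -r]]
  have hv : ∀ i i', ∑ k, starRingEnd ℂ (v i k) * v i' k = if i = i' then 1 else 0 := by
    intro i i'
    fin_cases i <;> fin_cases i' <;> simp [v, hrs, hr] <;> norm_num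
  have hv0 : Matrix.vecMulVec (v 0) (star (v 0)) = (1 / 2 : ℂ) • (1 + σ1) := by
    ext i j
    fin_cases i <;> fin_cases j <;> simp [v, σ1, Matrix.vecMulVec_apply, hrs, hr]
  have hv1 : Matrix.vecMulVec (v 1) (star (v 1)) = (1 / 2 : ℂ) • (1 - σ1) := by
    ext i j
    fin_cases i <;> fin_cases j <;> simp [v, σ1, Matrix.vecMulVec_apply, hrs, hr]
  refine ⟨fun i j => if i = j then (1 + A) / 4 else (1 - A) / 4, v, v, fun i j => ?_, ?_, hv, hv,
    ?_⟩
  · dsimp only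
    split_ifs <;> linarith
  · simp only [Fin.sum_univ_two, Fin.isValue, ↓reduceIte, zero_ne_one, one_ne_zero]
    ring
  · simp only [Fin.sum_univ_two, hv0, hv1, BD, Matrix.smul_kronecker, Matrix.kronecker_smul,
      Matrix.add_kronecker, Matrix.kronecker_add, Matrix.sub_kronecker, Matrix.kronecker_sub,
      Matrix.one_kronecker_one]
    simp only [one_div, Complex.coe_smul, Complex.ofReal_zero, zero_smul, add_zero, smul_add,
      ↓reduceIte, Complex.ofReal_div, Complex.ofReal_add, Complex.ofReal_one, Complex.ofReal_ofNat,
      Fin.isValue, zero_ne_one, Complex.ofReal_sub, one_ne_zero]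
    module

lemma exists_unit_sqrt_mul_eq (x z : ℝ) :
    ∃ u v : ℝ, u ^ 2 + v ^ 2 = 1 ∧ √(x ^ 2 + z ^ 2) * u = x ∧ √(x ^ 2 + z ^ 2) * v = z := by
  by_cases h : x ^ 2 + z ^ 2 = 0
  · have hx : x = 0 := by nlinarith [sq_nonneg x, sq_nonneg z]
    have hz : z = 0 := by nlinarith [sq_nonneg x, sq_nonneg z]
    exact ⟨1, 0, by norm_num, by simp [hx, hz], by simp [hz]⟩
  · have hr : √(x ^ 2 + z ^ 2) ≠ 0 := by positivity
    refine ⟨x / √(x ^ 2 + z ^ 2), z / √(x ^ 2 + z ^ 2), ?_, by field_simp, by field_simp⟩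
    rw [div_pow, div_pow, ← add_div, Real.sq_sqrt (by positivity), div_self h]

lemma exists_unit_dotProduct_eq_zero (m : Fin 3 → ℝ) :
    ∃ d : Fin 3 → ℝ, d ⬝ᵥ d = 1 ∧ d 1 = 0 ∧ d ⬝ᵥ m = 0 := by
  obtain ⟨u, v, huv, hu, hv⟩ := exists_unit_sqrt_mul_eq (m 0) (m 2)
  refine ⟨![-v, 0, u], ?_, rfl, ?_⟩ <;>
    simp only [dotProduct, Fin.sum_univ_three, Matrix.cons_val_zero, Matrix.cons_val_one,
      Matrix.cons_val]
  · linear_combination huv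
  · linear_combination v * hu - u * hv

lemma exists_unit_dotProduct_eq_sqrt {w : Fin 3 → ℝ} (hw : w 1 = 0) :
    ∃ e : Fin 3 → ℝ, e ⬝ᵥ e = 1 ∧ e 1 = 0 ∧ e ⬝ᵥ w = √(w ⬝ᵥ w) := by
  obtain ⟨u, v, huv, hu, hv⟩ := exists_unit_sqrt_mul_eq (w 0) (w 2)
  have hww : w ⬝ᵥ w = w 0 ^ 2 + w 2 ^ 2 := by simp [dotProduct, Fin.sum_univ_three, hw, sq]
  refine ⟨![u, 0, v], ?_, rfl, ?_⟩
  · simp only [dotProduct, Fin.sum_univ_three, Matrix.cons_val_zero, Matrix.cons_val_one,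
      Matrix.cons_val]
    linear_combination huv
  · rw [hww]
    simp only [dotProduct, Fin.sum_univ_three, Matrix.cons_val_zero, Matrix.cons_val_one,
      Matrix.cons_val, hw]
    linear_combination -u * hu - v * hv + √(w 0 ^ 2 + w 2 ^ 2) * huv

lemma exists_isCPTP_BD_classical {A c : ℝ} (hcA : |c| ≤ |A|) {χ : Mat4} (hχ : IsClassical χ) :
    ∃ Φ, IsCPTP Φ ∧ Φ (BD A (-(A * c)) c) = BD 0 0 c ∧ Φ χ = BD 0 0 0 := by
  obtain ⟨m, n, α, β, γ, rfl⟩ := hχ.exists_pauliVec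
  obtain ⟨d, hd, hd1, hdm⟩ := exists_unit_dotProduct_eq_zero m
  obtain ⟨e, he, he1, hew⟩ := exists_unit_dotProduct_eq_sqrt (w := ![A * d 0, 0, c * d 2]) rfl
  set L := √(![A * d 0, 0, c * d 2] ⬝ᵥ ![A * d 0, 0, c * d 2])
  have hdeL : A * d 0 * e 0 + c * d 2 * e 2 = L := by
    rw [← hew]
    simp only [Fin.isValue, dotProduct, Fin.sum_univ_three, Matrix.cons_val_zero,
      Matrix.cons_val_one, mul_zero, add_zero, Matrix.cons_val]
    ring
  have hcL : |c| ≤ L := by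
    have hd' : d 0 ^ 2 + d 2 ^ 2 = 1 := by simpa [dotProduct, Fin.sum_univ_three, hd1, sq] using hd
    have hc2 : c ^ 2 ≤ A ^ 2 := sq_le_sq.2 hcA
    rw [← Real.sqrt_sq_eq_abs]
    apply Real.sqrt_le_sqrt
    simp only [dotProduct, Fin.sum_univ_three, Matrix.cons_val_zero, Matrix.cons_val_one,
      mul_zero, add_zero, Matrix.cons_val]
    nlinarith [sq_nonneg (d 0)]
  have hκ : |c / L| ≤ 1 := by
    rw [abs_div, abs_of_nonneg (Real.sqrt_nonneg _)]
    exact div_le_one_of_le₀ hcL (Real.sqrt_nonneg _)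
  have hκL : c / L * L = c := by
    rcases (Real.sqrt_nonneg _).eq_or_lt with hL | hL
    · have hc : c = 0 := abs_nonpos_iff.1 (hL ▸ hcL)
      simp [hc]
    · exact div_mul_cancel₀ c hL.ne'
  obtain ⟨R, hR, hRd⟩ := exists_unitary_conj_pauliVec hd hd1
  obtain ⟨S, hS, hSe⟩ := exists_unitary_conj_pauliVec he he1
  have hU : (R ⊗ₖ S)ᴴ * (R ⊗ₖ S) = 1 := by
    rw [← Matrix.star_eq_conjTranspose]
    exact Unitary.star_mul_self_of_mem (Matrix.kronecker_mem_unitary hR hS)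
  refine ⟨(fun X => (R ⊗ₖ S) * X * (R ⊗ₖ S)ᴴ) ∘ dephasingChannel d e (c / L),
    (IsCPTP.conj hU).comp (isCPTP_dephasingChannel hd he hκ), ?_, ?_⟩
  · rw [Function.comp_apply, dephasingChannel_BD hd he hd1 he1, hdeL, hκL,
      kronecker_conj_eq_BD hR hS hRd hSe]
  · rw [Function.comp_apply, dephasingChannel_bloch hd he he1 hdm,
      ← kronecker_conj_eq_BD hR hS hRd hSe 0, Complex.ofReal_zero, zero_smul, add_zero]

section discord

variable {D : Mat4 → Mat4 → ℝ} {A c : ℝ}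

lemma dist_BD_axis3_le_dist_classical (hD : Contractive D) (hA : |A| ≤ 1) (hcA : |c| ≤ |A|)
    {χ : Mat4} (hχ : IsClassical χ) : D (BD 0 0 c) (BD 0 0 0) ≤ D (BD A (-(A * c)) c) χ := by
  obtain ⟨Φ, hΦ, hΦρ, hΦχ⟩ := exists_isCPTP_BD_classical hcA hχ
  simpa only [hΦρ, hΦχ] using
    hD Φ hΦ _ _ (isDensityMatrix_BD_neg_mul hA (hcA.trans hA)) hχ.isDensityMatrix_s12

lemma dist_BD_axis1_le_dist_BD_axis3 (hD : Contractive D) (hA : |A| ≤ 1) (hc : |c| ≤ 1) :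
    D (BD A (-(A * c)) c) (BD A 0 0) ≤ D (BD 0 0 c) (BD 0 0 0) := by
  have h := hD _ (isCPTP_cnotPrepareChannel hA) _ _ (isDensityMatrix_BD_axis3 hc)
    (isDensityMatrix_BD_axis3 (c := 0) (by simp))
  rwa [cnotPrepareChannel_BD hA, cnotPrepareChannel_BD hA, mul_zero, neg_zero] at h

lemma QD_BD (hD : Contractive D) (hA : |A| ≤ 1) (hcA : |c| ≤ |A|) :
    QD D (BD A (-(A * c)) c) = D (BD 0 0 c) (BD 0 0 0) := by
  refine IsLeast.csInf_eq ⟨⟨BD A 0 0, isClassical_BD_axis1 hA, le_antisymm ?_ ?_⟩, ?_⟩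
  · exact dist_BD_axis3_le_dist_classical hD hA hcA (isClassical_BD_axis1 hA)
  · exact dist_BD_axis1_le_dist_BD_axis3 hD hA (hcA.trans hA)
  · rintro _ ⟨χ, hχ, rfl⟩
    exact dist_BD_axis3_le_dist_classical hD hA hcA hχ

end discord

theorem universal_freezing_general
    (D : Mat4 → Mat4 → ℝ) (hD : Contractive D) (c1 c3 γ : ℝ)
    (hc1 : c1 ∈ Set.Icc (-1 : ℝ) 1) (hγ : 0 < γ) :
    ∀ t : ℝ, 0 ≤ t → |c3| ≤ Real.exp (-(2 * γ * t)) * |c1| →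
      QD D (BD (c1 * Real.exp (-(2 * γ * t)))
              (-(c1 * c3 * Real.exp (-(2 * γ * t)))) c3)
        = D (BD 0 0 c3) (BD 0 0 0) := by
  intro t ht hfreeze
  set q := Real.exp (-(2 * γ * t))
  have hq₀ : 0 < q := Real.exp_pos _
  have hq₁ : q ≤ 1 := Real.exp_le_one_iff.2 (by nlinarith)
  have hqc1 : |c1 * q| = q * |c1| := by rw [abs_mul, abs_of_pos hq₀, mul_comm]
  have hA : |c1 * q| ≤ 1 := by
    rw [hqc1]
    nlinarith [abs_le.2 hc1, abs_nonneg c1]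
  rw [show -(c1 * c3 * q) = -(c1 * q * c3) by ring]
  exact QD_BD hD hA (hqc1 ▸ hfreeze)

/-- Universal freezing: as long as e^{-2γt}|c1| ≥ |c3|, the geometric
discord of the evolved state is constant, equal to D(ρ(0,0,c3), ρ(0,0,0)). -/
theorem universal_freezing
    (D : Mat4 → Mat4 → ℝ) (hD : Contractive D) (hT : TransposeInvariant D)
    (hJC : JointlyConvex D) (c1 c3 γ : ℝ)
    (hc1 : c1 ∈ Set.Icc (-1 : ℝ) 1) (hc3 : c3 ∈ Set.Icc (-1 : ℝ) 1) (hγ : 0 < γ) :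
    ∀ t : ℝ, 0 ≤ t → |c3| ≤ Real.exp (-(2 * γ * t)) * |c1| →
      QD D (BD (c1 * Real.exp (-(2 * γ * t)))
              (-(c1 * c3 * Real.exp (-(2 * γ * t)))) c3)
        = D (BD 0 0 c3) (BD 0 0 0) :=
  universal_freezing_general D hD c1 c3 γ hc1 hγ
end
end
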